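/- arXiv:2402.00545 — 7 statements merged into one kernel-verified Lean document; each statement's English description precedes it below -/
import Mathlib

section
/- Let Y ⊆ Y' be A-lattices in V and let 𝔭 be a maximal ideal of A such that the 𝔭-torsion of the finite A-module Y'/Y is trivial. Then the canonical map Y/𝔭Y → Y'/𝔭Y' is an isomorphism of r-dimensional A/𝔭-vector spaces, and for each i with 0 ≤ i < r the map Z ↦ Z + 𝔭Y' is a bijection from ℒ(Y,𝔭,i) onto ℒ(Y',𝔭,i), with inverse Z' ↦ Z' ∩ Y. -/
/-!
An element `s ∈ (Y : Y')` outside `𝔭` is a unit modulo `𝔭`, which gives `Y + 𝔭Y' = Y'` and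
`Y ∩ 𝔭Y' = 𝔭Y`; the statement about `ℒ` is then the diamond isomorphism between the intervals
`[𝔭Y, Y]` and `[𝔭Y', Y']` of the modular lattice of submodules. Such an `s` exists because
`Y'/Y` has no `𝔭`-torsion: if `(Y : Y') ⊆ 𝔭`, cancelling `𝔭` in `(Y : Y') = 𝔭D` yields
`c ∈ D \ (Y : Y')` with `𝔭cY' ⊆ Y`.

For `#(Y/𝔭Y) = #(A/𝔭)^r`, lift an `A/𝔭`-basis of `Y/𝔭Y` to `Y`. By Nakayama the lifts generate
`Y` up to an element prime to `𝔭`, so they span `V` over `K`. Their module of `A`-relations lies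
in `𝔭A^d` (the lifts are independent modulo `𝔭`) and is saturated (`V` is torsion-free), so
dividing by a uniformiser at `𝔭` puts it inside `𝔭` times itself, and by Nakayama it vanishes.
-/

open scoped Pointwise

namespace Submodule

variable {R M : Type*} [CommRing R] [AddCommGroup M] [Module R M]

theorem comap_subtype_smul_self (I : Ideal R) (N : Submodule R M) :
    comap N.subtype (I • N) = I • ⊤ := by
  ext x
  exact (mem_smul_top_iff I N x).symm

theorem natCard_sup_quotient (Z W : Submodule R M) :
    Nat.card (↥(Z ⊔ W) ⧸ comap (Z ⊔ W).subtype W) =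
      Nat.card (Z ⧸ comap Z.subtype (Z ⊓ W)) :=
  (Nat.card_congr (LinearMap.quotientInfEquivSupQuotient Z W).toEquiv).symm

theorem mem_smul_top_of_forall_apply_mem {ι : Type*} [Finite ι] (I : Ideal R) {c : ι → R}
    (hc : ∀ i, c i ∈ I) : c ∈ I • (⊤ : Submodule R (ι → R)) := by
  classical
  have := Fintype.ofFinite ι
  rw [pi_eq_sum_univ c]
  exact sum_mem fun i _ => smul_mem_smul (hc i) mem_top

variable {𝔭 : Ideal R} [𝔭.IsMaximal] {Y Y' : Submodule R M} {s : R}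

theorem sup_smul_eq_of_mem_colon (hle : Y ≤ Y') (hs : s ∉ 𝔭) (hsY : s ∈ Y.colon Y') :
    Y ⊔ 𝔭 • Y' = Y' := by
  refine le_antisymm (sup_le hle smul_le_right) fun y hy => ?_
  obtain ⟨t, i, hi, hti⟩ := Ideal.IsMaximal.exists_inv ‹_› hs
  have hy_eq : y = t • s • y + i • y := by rw [smul_smul, ← add_smul, hti, one_smul]
  rw [hy_eq]
  exact add_mem (mem_sup_left (Y.smul_mem t (mem_colon.mp hsY y hy)))
    (mem_sup_right (smul_mem_smul hi hy))

theorem inf_smul_eq_of_mem_colon (hle : Y ≤ Y') (hs : s ∉ 𝔭) (hsY : s ∈ Y.colon Y') :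
    Y ⊓ 𝔭 • Y' = 𝔭 • Y := by
  refine le_antisymm (fun y ⟨hyY, hy⟩ => ?_) (le_inf smul_le_right (smul_mono le_rfl hle))
  obtain ⟨t, i, hi, hti⟩ := Ideal.IsMaximal.exists_inv ‹_› hs
  have hy_eq : y = t • s • y + i • y := by rw [smul_smul, ← add_smul, hti, one_smul]
  have hsy : s • y ∈ 𝔭 • Y := by
    refine smul_induction_on hy (fun a ha z hz => ?_) (fun _ _ h₁ h₂ => ?_)
    · rw [smul_comm]
      exact smul_mem_smul ha (mem_colon.mp hsY z hz)
    · rw [smul_add]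
      exact add_mem h₁ h₂
  rw [hy_eq]
  exact add_mem (smul_mem _ t hsy) (smul_mem_smul hi hyY)

theorem exists_notMem_smul_mem_span_of_span_mk_eq_top [Module.Finite R M] {ι : Type*}
    {v : ι → M} (hv : span (R ⧸ 𝔭)
      (Set.range fun i => (Quotient.mk (v i) : M ⧸ 𝔭 • (⊤ : Submodule R M))) = ⊤) :
    ∃ s ∉ 𝔭, ∀ x, s • x ∈ span R (Set.range v) := by
  have hmap : (span R (Set.range v)).map (𝔭 • ⊤ : Submodule R M).mkQ = ⊤ := by
    rw [map_span, ← Set.range_comp,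
      ← restrictScalars_span R (R ⧸ 𝔭) Ideal.Quotient.mk_surjective]
    exact (congrArg _ hv).trans (restrictScalars_top _ _ _)
  have htop : ⊤ ≤ span R (Set.range v) ⊔ 𝔭 • ⊤ := by
    rw [sup_comm, ← comap_map_mkQ, hmap, comap_top]
  obtain ⟨s, hs, hsv⟩ :=
    exists_sub_one_mem_and_smul_le_of_fg_of_le_sup Module.Finite.fg_top le_rfl htop
  refine ⟨s, fun h => Ideal.IsMaximal.ne_top ‹_› ((Ideal.eq_top_iff_one _).mpr ?_), fun x => ?_⟩
  · simpa using 𝔭.sub_mem h hs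
  · exact hsv (smul_mem_pointwise_smul x s ⊤ trivial)

end Submodule

section Dedekind

variable {A : Type*} [CommRing A] [IsDedekindDomain A] {𝔭 : Ideal A} [𝔭.IsMaximal]

theorem Submodule.exists_notMem_mem_colon {M : Type*} [AddCommGroup M] [Module A M]
    {Y Y' : Submodule A M} (hI : Y.colon Y' ≠ ⊥)
    (htor : ∀ y ∈ Y', (∀ a ∈ 𝔭, a • y ∈ Y) → y ∈ Y) : ∃ s ∉ 𝔭, s ∈ Y.colon Y' := by
  by_contra! hnot
  set I := Y.colon (Y' : Set M)
  obtain ⟨D, hID⟩ := Ideal.dvd_iff_le.mpr fun s hs => by_contra fun h => hnot s h hs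
  have hD : ¬ D ≤ I := fun h => Ideal.IsMaximal.ne_top ‹_› <| by
    have hle : I ≤ 𝔭 * I := hID.trans_le (Ideal.mul_mono_right h)
    have h𝔭I : 𝔭 * I = 1 * I := by
      rw [one_mul]
      exact le_antisymm Ideal.mul_le_right hle
    rw [mul_right_cancel₀ hI h𝔭I, Ideal.one_eq_top]
  obtain ⟨c, hcD, hcI⟩ := SetLike.not_le_iff_exists.mp hD
  refine hcI (mem_colon.mpr fun y hy => htor _ (Y'.smul_mem c hy) fun a ha => ?_)
  rw [smul_smul]
  exact mem_colon.mp (hID.symm ▸ Ideal.mul_mem_mul ha hcD : a * c ∈ I) y hy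

theorem Ideal.exists_mul_mem_span_singleton (h0 : 𝔭 ≠ ⊥) :
    ∃ π ∈ 𝔭, π ≠ 0 ∧ ∃ s ∉ 𝔭, ∀ a ∈ 𝔭, s * a ∈ span {π} := by
  obtain ⟨π, hπ, hπ2⟩ := exists_mem_pow_notMem_pow_succ 𝔭 h0 (IsMaximal.ne_top ‹_›) 1
  rw [pow_one] at hπ
  obtain ⟨J, hJ⟩ := dvd_iff_le.mpr ((span_singleton_le_iff_mem _).mpr hπ)
  have hJ𝔭 : ¬ J ≤ 𝔭 := fun h => hπ2 <| by
    rw [pow_two]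
    exact mul_mono_right h (hJ ▸ mem_span_singleton_self π : π ∈ 𝔭 * J)
  obtain ⟨s, hsJ, hs𝔭⟩ := SetLike.not_le_iff_exists.mp hJ𝔭
  refine ⟨π, hπ, fun h => hπ2 (h ▸ zero_mem _), s, hs𝔭, fun a ha => ?_⟩
  rw [hJ, mul_comm s]
  exact mul_mem_mul ha hsJ

variable {P M : Type*} [AddCommGroup P] [Module A P] [AddCommGroup M] [Module A M]
  [Module.IsTorsionFree A M]

theorem LinearMap.ker_le_smul_ker_of_le_smul_top (f : P →ₗ[A] M) (hf : ker f ≤ 𝔭 • ⊤) :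
    ker f ≤ 𝔭 • ker f := by
  rcases eq_or_ne 𝔭 ⊥ with rfl | h0
  · simpa using hf
  obtain ⟨π, hπ, hπ0, s, hs, hsπ⟩ := Ideal.exists_mul_mem_span_singleton h0
  have hdiv : ∀ x ∈ 𝔭 • (⊤ : Submodule A P), ∃ x', s • x = π • x' := by
    intro x hx
    refine Submodule.smul_induction_on hx (fun a ha y _ => ?_) ?_
    · obtain ⟨c, hc⟩ := Ideal.mem_span_singleton'.mp (hsπ a ha)
      exact ⟨c • y, by rw [smul_smul, ← hc, mul_comm, mul_smul]⟩
    · rintro x y ⟨x', hx'⟩ ⟨y', hy'⟩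
      exact ⟨x' + y', by rw [smul_add, smul_add, hx', hy']⟩
  intro x hx
  obtain ⟨x', hx'⟩ := hdiv x (hf hx)
  have hx'ker : x' ∈ ker f := by
    have : π • f x' = 0 := by rw [← map_smul, ← hx', map_smul, mem_ker.mp hx, smul_zero]
    exact mem_ker.mpr ((smul_eq_zero.mp this).resolve_left hπ0)
  obtain ⟨t, i, hi, hti⟩ := Ideal.IsMaximal.exists_inv ‹_› hs
  have hx_eq : x = t • s • x + i • x := by rw [smul_smul, ← add_smul, hti, one_smul]
  rw [hx_eq, hx']
  exact add_mem (Submodule.smul_mem _ t (Submodule.smul_mem_smul hπ hx'ker))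
    (Submodule.smul_mem_smul hi hx)

theorem LinearMap.ker_eq_bot_of_ker_le_smul_top [IsNoetherian A P] [Module.IsTorsionFree A P]
    (f : P →ₗ[A] M) (hf : ker f ≤ 𝔭 • ⊤) : ker f = ⊥ := by
  obtain ⟨e, he, hker⟩ := Submodule.exists_sub_one_mem_and_smul_eq_zero_of_fg_of_le_smul 𝔭
    (ker f) (IsNoetherian.noetherian _) (ker_le_smul_ker_of_le_smul_top f hf)
  have he0 : e ≠ 0 := fun h => Ideal.IsMaximal.ne_top ‹_› <| (Ideal.eq_top_iff_one _).mpr <| by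
    simpa [h] using 𝔭.neg_mem_iff.mpr he
  exact (Submodule.eq_bot_iff _).mpr fun x hx =>
    (smul_eq_zero.mp (hker x hx)).resolve_left he0

theorem linearIndependent_of_linearIndependent_mk {ι : Type*} [Fintype ι] {v : ι → M}
    (hv : LinearIndependent (A ⧸ 𝔭)
      fun i => (Submodule.Quotient.mk (v i) : M ⧸ 𝔭 • (⊤ : Submodule A M))) :
    LinearIndependent A v := by
  rw [linearIndependent_iff_injective_fintypeLinearCombination, ← LinearMap.ker_eq_bot]
  refine LinearMap.ker_eq_bot_of_ker_le_smul_top (𝔭 := 𝔭) _ fun c hc => ?_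
  refine Submodule.mem_smul_top_of_forall_apply_mem 𝔭 fun i => ?_
  have hsum : ∑ i, Ideal.Quotient.mk 𝔭 (c i) •
      (Submodule.Quotient.mk (v i) : M ⧸ 𝔭 • (⊤ : Submodule A M)) = 0 := by
    have hc' : ∑ i, c i • v i = 0 := by simpa [Fintype.linearCombination_apply] using hc
    simp_rw [Module.Quotient.mk_smul_mk, ← Submodule.mkQ_apply, ← map_sum, hc', map_zero]
  exact Ideal.Quotient.eq_zero_iff_mem.mp (Fintype.linearIndependent_iff.mp hv _ hsum i)

end Dedekind

namespace Submodule

variable {A K V : Type*} [CommRing A] [Field K] [Algebra A K] [IsFractionRing A K]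
  [AddCommGroup V] [Module K V] [Module A V] [IsScalarTower A K V]

theorem colon_singleton_ne_bot_of_mem_span [IsDomain A] {Y : Submodule A V} {x : V}
    (hx : x ∈ span K (Y : Set V)) : Y.colon {x} ≠ ⊥ := by
  obtain ⟨n, f, g, rfl⟩ := mem_span_set'.mp hx
  obtain ⟨b, hb⟩ := IsLocalization.exist_integer_multiples_of_finite (nonZeroDivisors A) f
  choose c hc using hb
  refine (Submodule.ne_bot_iff _).mpr
    ⟨b, mem_colon_singleton.mpr ?_, nonZeroDivisors.coe_ne_zero b⟩
  rw [Finset.smul_sum]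
  refine sum_mem fun i _ => ?_
  rw [← smul_assoc, ← hc, algebraMap_smul]
  exact Y.smul_mem _ (g i).2

theorem colon_ne_bot_of_span_eq_top [IsDomain A] {Y Y' : Submodule A V} (hY' : Y'.FG)
    (hspan : span K (Y : Set V) = ⊤) : Y.colon Y' ≠ ⊥ := by
  induction Y', hY' using fg_induction with
  | singleton x =>
    rw [colon_span]
    exact colon_singleton_ne_bot_of_mem_span (hspan ▸ mem_top)
  | sup N₁ N₂ _ _ h₁ h₂ =>
    rw [← span_eq N₁, ← span_eq N₂, ← span_union, colon_span, colon_union]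
    exact ne_bot_of_le_ne_bot (fun h => (Ideal.mul_eq_bot.mp h).elim h₁ h₂) Ideal.mul_le_inf

theorem span_range_eq_top_of_forall_smul_mem {Y : Submodule A V} (hspan : span K (Y : Set V) = ⊤)
    {ι : Type*} {w : ι → V} {s : A} (hs : s ≠ 0)
    (hsw : ∀ x ∈ Y, s • x ∈ span A (Set.range w)) : span K (Set.range w) = ⊤ := by
  have hs0 : algebraMap A K s ≠ 0 := (map_ne_zero_iff _ (IsFractionRing.injective A K)).mpr hs
  refine eq_top_iff.mpr (hspan ▸ span_le.mpr fun x hx => ?_)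
  have hsx : algebraMap A K s • x ∈ span K (Set.range w) := by
    rw [algebraMap_smul]
    exact span_le_restrictScalars A K _ (hsw x hx)
  have h := smul_mem _ (algebraMap A K s)⁻¹ hsx
  rwa [smul_smul, inv_mul_cancel₀ hs0, one_smul] at h

theorem natCard_quotient_smul_eq_pow_finrank [IsDedekindDomain A] (𝔭 : Ideal A) [𝔭.IsMaximal]
    {Y : Submodule A V} (hY : Y.FG) (hspan : span K (Y : Set V) = ⊤) :
    Nat.card (Y ⧸ comap Y.subtype (𝔭 • Y)) = Nat.card (A ⧸ 𝔭) ^ Module.finrank K V := by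
  have : Module.Finite A Y := Module.Finite.iff_fg.mpr hY
  have : Module.IsTorsionFree A V := .trans_faithfulSMul A K V
  rw [comap_subtype_smul_self]
  set Q := Y ⧸ 𝔭 • (⊤ : Submodule A Y)
  let := Ideal.Quotient.field 𝔭
  have : Module.Finite (A ⧸ 𝔭) Q := Module.Finite.of_restrictScalars_finite A _ _
  let b := Module.finBasis (A ⧸ 𝔭) Q
  choose v hv using fun i => Quotient.mk_surjective (p := 𝔭 • (⊤ : Submodule A Y)) (b i)
  have hb : (fun i => (Quotient.mk (v i) : Q)) = b := funext hv
  have hli : LinearIndependent K (Y.subtype ∘ v) := by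
    rw [← LinearIndependent.iff_fractionRing A K]
    refine (linearIndependent_of_linearIndependent_mk (𝔭 := 𝔭) ?_).map' _ (ker_subtype Y)
    exact hb ▸ b.linearIndependent
  obtain ⟨s, hs, hsv⟩ := exists_notMem_smul_mem_span_of_span_mk_eq_top (v := v)
    (hb ▸ b.span_eq)
  have hs0 : s ≠ 0 := fun h => hs (h ▸ zero_mem 𝔭)
  have hspan' : span K (Set.range (Y.subtype ∘ v)) = ⊤ :=
    span_range_eq_top_of_forall_smul_mem hspan hs0 fun x hx => by
      rw [Set.range_comp, ← map_span]
      exact mem_map_of_mem (hsv ⟨x, hx⟩)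
  have hrank : Module.finrank K V = Module.finrank (A ⧸ 𝔭) Q := by
    rw [Module.finrank_eq_card_basis (Module.Basis.mk hli hspan'.ge), Fintype.card_fin]
  rw [Module.natCard_eq_pow_finrank (K := A ⧸ 𝔭), hrank]

end Submodule

open scoped Classical

noncomputable section

variable {A : Type*} [CommRing A] [IsDomain A] [IsDedekindDomain A]
variable {K : Type*} [Field K] [Algebra A K] [IsFractionRing A K]
variable {r : ℕ}

def IsLattice (Y : Submodule A (Fin r → K)) : Prop :=
  Y.FG ∧ Submodule.span K (Y : Set (Fin r → K)) = ⊤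

/-- `Z/𝔭Y` being `i`-dimensional over `A/𝔭` is expressed through its cardinality `#(A/𝔭)^i`. -/
def lset (𝔭 : Ideal A) (Y : Submodule A (Fin r → K)) (i : ℕ) :
    Set (Submodule A (Fin r → K)) :=
  {Z | 𝔭 • Y ≤ Z ∧ Z ≤ Y ∧
    Nat.card (Z ⧸ Submodule.comap Z.subtype (𝔭 • Y)) = Nat.card (A ⧸ 𝔭) ^ i}

section

variable {A : Type*} [CommRing A] {K : Type*} [Field K] [Algebra A K] {r : ℕ}
  {𝔭 : Ideal A} {Y Y' : Submodule A (Fin r → K)} {i : ℕ}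

theorem sup_smul_mem_lset (hle : Y ≤ Y') (hinf : Y ⊓ 𝔭 • Y' = 𝔭 • Y) {Z : Submodule A (Fin r → K)}
    (hZ : Z ∈ lset 𝔭 Y i) : Z ⊔ 𝔭 • Y' ∈ lset 𝔭 Y' i ∧ (Z ⊔ 𝔭 • Y') ⊓ Y = Z := by
  obtain ⟨h𝔭Z, hZY, hcard⟩ := hZ
  have hZinf : Z ⊓ 𝔭 • Y' = 𝔭 • Y := by
    rw [← inf_eq_left.mpr hZY, inf_assoc, hinf, inf_eq_right.mpr h𝔭Z]
  refine ⟨⟨le_sup_right, sup_le (hZY.trans hle) Submodule.smul_le_right, ?_⟩, ?_⟩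
  · rw [Submodule.natCard_sup_quotient, hZinf, hcard]
  · rw [sup_inf_assoc_of_le _ hZY, inf_comm, hinf, sup_eq_left.mpr h𝔭Z]

theorem inf_mem_lset (hsup : Y ⊔ 𝔭 • Y' = Y') (hinf : Y ⊓ 𝔭 • Y' = 𝔭 • Y)
    {Z' : Submodule A (Fin r → K)} (hZ' : Z' ∈ lset 𝔭 Y' i) :
    Z' ⊓ Y ∈ lset 𝔭 Y i ∧ Z' ⊓ Y ⊔ 𝔭 • Y' = Z' := by
  obtain ⟨h𝔭Z', hZ'Y', hcard⟩ := hZ'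
  have hsup' : Z' ⊓ Y ⊔ 𝔭 • Y' = Z' := by
    rw [inf_sup_assoc_of_le _ h𝔭Z', hsup, inf_eq_left.mpr hZ'Y']
  have hinf' : Z' ⊓ Y ⊓ 𝔭 • Y' = 𝔭 • Y := by
    rw [inf_assoc, hinf, inf_eq_right.mpr (hinf ▸ inf_le_right.trans h𝔭Z')]
  refine ⟨⟨le_inf (hinf ▸ inf_le_right.trans h𝔭Z') (hinf ▸ inf_le_left), inf_le_right, ?_⟩, hsup'⟩
  rw [← hinf', ← Submodule.natCard_sup_quotient, hsup', hcard]

end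

theorem statement1_general
    (Y Y' : Submodule A (Fin r → K)) (hY : IsLattice Y) (hY' : IsLattice Y')
    (hle : Y ≤ Y')
    (𝔭 : Ideal A) (h𝔭 : 𝔭.IsMaximal)
    (htor : ∀ y ∈ Y', (∀ a ∈ 𝔭, a • y ∈ Y) → y ∈ Y) :
    (Y ⊔ 𝔭 • Y' = Y') ∧ (Y ⊓ 𝔭 • Y' = 𝔭 • Y) ∧
    Nat.card (Y ⧸ Submodule.comap Y.subtype (𝔭 • Y)) = Nat.card (A ⧸ 𝔭) ^ r ∧
    Nat.card (Y' ⧸ Submodule.comap Y'.subtype (𝔭 • Y')) = Nat.card (A ⧸ 𝔭) ^ r ∧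
    ∀ i : ℕ, i < r →
      (∀ Z ∈ lset 𝔭 Y i, (Z ⊔ 𝔭 • Y') ∈ lset 𝔭 Y' i ∧ (Z ⊔ 𝔭 • Y') ⊓ Y = Z) ∧
      (∀ Z' ∈ lset 𝔭 Y' i, (Z' ⊓ Y) ∈ lset 𝔭 Y i ∧ (Z' ⊓ Y) ⊔ 𝔭 • Y' = Z') := by
  obtain ⟨s, hs, hsY⟩ :=
    Submodule.exists_notMem_mem_colon (Submodule.colon_ne_bot_of_span_eq_top hY'.1 hY.2) htor
  have hsup := Submodule.sup_smul_eq_of_mem_colon hle hs hsY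
  have hinf := Submodule.inf_smul_eq_of_mem_colon hle hs hsY
  have hcard {W : Submodule A (Fin r → K)} (hW : IsLattice W) :
      Nat.card (W ⧸ Submodule.comap W.subtype (𝔭 • W)) = Nat.card (A ⧸ 𝔭) ^ r := by
    rw [Submodule.natCard_quotient_smul_eq_pow_finrank 𝔭 hW.1 hW.2, Module.finrank_fin_fun]
  exact ⟨hsup, hinf, hcard hY, hcard hY', fun _ _ =>
    ⟨fun _ hZ => sup_smul_mem_lset hle hinf hZ, fun _ hZ' => inf_mem_lset hsup hinf hZ'⟩⟩

/-- Let `Y ⊆ Y'` be `A`-lattices in `V` and `𝔭` a maximal ideal of `A`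
such that the `𝔭`-torsion of `Y'/Y` is trivial. Then the canonical map
`Y/𝔭Y → Y'/𝔭Y'` is an isomorphism of `r`-dimensional `A/𝔭`-vector spaces
(expressed by: `Y ⊔ 𝔭Y' = Y'`, `Y ⊓ 𝔭Y' = 𝔭Y`, and both quotients have
`#(A/𝔭)^r` elements), and for each `0 ≤ i < r` the map `Z ↦ Z + 𝔭Y'` is a
bijection from `ℒ(Y,𝔭,i)` onto `ℒ(Y',𝔭,i)` with inverse `Z' ↦ Z' ∩ Y`. -/
theorem statement1
    {p q : ℕ} (hp : p.Prime) (hq : ∃ n : ℕ, 0 < n ∧ q = p ^ n)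
    {F : Type*} [Field F] [Fintype F] (hF : Fintype.card F = q) [Algebra F A]
    (hfin : ∀ I : Ideal A, I ≠ ⊥ → Finite (A ⧸ I))
    (hr : 1 ≤ r)
    (Y Y' : Submodule A (Fin r → K)) (hY : IsLattice Y) (hY' : IsLattice Y')
    (hle : Y ≤ Y')
    (𝔭 : Ideal A) (h𝔭 : 𝔭.IsMaximal)
    (htor : ∀ y ∈ Y', (∀ a ∈ 𝔭, a • y ∈ Y) → y ∈ Y) :
    (Y ⊔ 𝔭 • Y' = Y') ∧ (Y ⊓ 𝔭 • Y' = 𝔭 • Y) ∧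
    Nat.card (Y ⧸ Submodule.comap Y.subtype (𝔭 • Y)) = Nat.card (A ⧸ 𝔭) ^ r ∧
    Nat.card (Y' ⧸ Submodule.comap Y'.subtype (𝔭 • Y')) = Nat.card (A ⧸ 𝔭) ^ r ∧
    ∀ i : ℕ, i < r →
      (∀ Z ∈ lset 𝔭 Y i, (Z ⊔ 𝔭 • Y') ∈ lset 𝔭 Y' i ∧ (Z ⊔ 𝔭 • Y') ⊓ Y = Z) ∧
      (∀ Z' ∈ lset 𝔭 Y' i, (Z' ⊓ Y) ∈ lset 𝔭 Y i ∧ (Z' ⊓ Y) ⊔ 𝔭 • Y' = Z') :=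
  statement1_general Y Y' hY hY' hle 𝔭 h𝔭 htor
end
end

section
/- Let Λ ⊆ Λ' be A-lattices of rank r in L with K·Λ = K·Λ', let R ⊆ Λ' be a set of representatives of the classes of Λ'/Λ with 0 ∈ R, and let v ∈ K·Λ with v ∉ Λ'. Then Δ^{Λ'|Λ} · ∏_{w ∈ R} e^Λ(v + w) = e^{Λ'}(v), where Δ^{Λ'|Λ} := (∏_{0 ≠ w ∈ R} e^Λ(w))^{−1}; in particular the left-hand side is independent of the choice of R. -/
open scoped Classical

noncomputable section

variable {Fq : Type*} [Field Fq] [Fintype Fq]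
variable {L : Type*} [NormedField L] [CompleteSpace L]
variable [Algebra (Polynomial Fq) L]

/-- `log_q |z|`. -/
def logq (q : ℕ) (z : L) : ℝ := Real.logb q ‖z‖

/-- An `A = 𝔽_q[T]`-lattice of rank `r` in `L`: a finitely generated `A`-submodule which is
free of rank `r` (equivalently: its `𝔽_q(T)`-span has dimension `r`), and which is
discrete in `L` (finite intersection with every bounded ball). -/
def IsLatticeOfRank (r : ℕ) (Λ : Submodule (Polynomial Fq) L) : Prop :=
  (∃ b : Fin r → L, LinearIndependent (Polynomial Fq) b ∧
      Submodule.span (Polynomial Fq) (Set.range b) = Λ) ∧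
  ∀ B : ℝ, {x : L | x ∈ Λ ∧ ‖x‖ ≤ B}.Finite

/-- Membership in `K·Λ`, the `K = 𝔽_q(T)`-span of `Λ` in `L`. -/
def InKSpan (Λ : Submodule (Polynomial Fq) L) (u : L) : Prop :=
  ∃ n : Polynomial Fq, n ≠ 0 ∧ n • u ∈ Λ

/-- The exponential function of the lattice `Λ`: `e^Λ(z) = z·∏_{0≠λ∈Λ} (1 - z/λ)`. -/
def latExp (Λ : Submodule (Polynomial Fq) L) (z : L) : L :=
  z * ∏' l : {x : L // x ∈ Λ ∧ x ≠ 0}, (1 - z / (l : L))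

/-- `R` is a complete set of representatives for the classes of `Λ'` modulo `Λ`. -/
def IsRepSet (Λ Λ' : Submodule (Polynomial Fq) L) (R : Finset L) : Prop :=
  (∀ w ∈ R, w ∈ Λ') ∧ ∀ y ∈ Λ', ∃! w, w ∈ R ∧ y - w ∈ Λ

/-- The discriminant `Δ^{Λ'|Λ} := (∏_{0 ≠ w ∈ Λ'/Λ} e^Λ(w))⁻¹`, computed via a choice of a
complete set of representatives containing `0` (the value is independent of this choice). -/
def latDisc (Λ Λ' : Submodule (Polynomial Fq) L) : L :=
  if h : ∃ R : Finset L, IsRepSet Λ Λ' R ∧ (0 : L) ∈ R then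
    (∏ w ∈ h.choose.erase 0, latExp Λ w)⁻¹
  else 1

/-! Write `e^Λ(z) = z ∏_{λ ∈ Λ} (1 + z/λ)`, the factor at `λ = 0` being `1`. For `w ∉ Λ` this gives
`e^Λ(v + w) = e^Λ(w) ∏_{λ ∈ Λ} (1 + v/(w + λ))`, while splitting `Λ'` into the cosets `w + Λ`,
`w ∈ R`, gives `e^{Λ'}(v) = v ∏_{w ∈ R} ∏_{λ ∈ Λ} (1 + v/(w + λ))`. Comparing the two yields the
relation, once one knows that `e^Λ(w) ≠ 0` for `w ∉ Λ`. All products converge since the norm is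
ultrametric and `‖λ‖ → ∞` along a lattice. -/

open Filter Topology Bornology

lemma exists_finset_forall_norm_sub_le {ι E : Type*} [SeminormedAddCommGroup E] {f : ι → E}
    {a : E} (hf : Tendsto f cofinite (𝓝 a)) {δ : ℝ} (hδ : 0 < δ) :
    ∃ S : Finset ι, ∀ i ∉ S, ‖f i - a‖ ≤ δ := by
  have h := eventually_cofinite.1 (hf.eventually (Metric.closedBall_mem_nhds a hδ))
  exact ⟨h.toFinset, fun i hi => by simpa [dist_eq_norm] using hi⟩

namespace IsUltrametricDist

section NormedCommRing

variable {ι K : Type*} [NormedCommRing K] [NormOneClass K] [IsUltrametricDist K]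

lemma norm_le_one_of_norm_sub_one_le_one {x : K} (h : ‖x - 1‖ ≤ 1) : ‖x‖ ≤ 1 := by
  simpa using (norm_add_le_max (x - 1) 1).trans (max_le h norm_one.le)

lemma norm_prod_sub_one_le {f : ι → K} {δ : ℝ} (hδ0 : 0 ≤ δ) (hδ1 : δ ≤ 1) (s : Finset ι)
    (h : ∀ i ∈ s, ‖f i - 1‖ ≤ δ) : ‖∏ i ∈ s, f i - 1‖ ≤ δ := by
  induction s using Finset.cons_induction with
  | empty => simpa using hδ0
  | cons a s ha ih =>
    rw [Finset.forall_mem_cons] at h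
    rw [Finset.prod_cons,
      show f a * ∏ i ∈ s, f i - 1 = f a * (∏ i ∈ s, f i - 1) + (f a - 1) by ring]
    refine (norm_add_le_max _ _).trans (max_le ?_ h.1)
    calc ‖f a * (∏ i ∈ s, f i - 1)‖ ≤ ‖f a‖ * ‖∏ i ∈ s, f i - 1‖ := norm_mul_le _ _
      _ ≤ 1 * δ := mul_le_mul (norm_le_one_of_norm_sub_one_le_one (h.1.trans hδ1)) (ih h.2)
          (norm_nonneg _) zero_le_one
      _ = δ := one_mul δ

theorem multipliable_of_tendsto_cofinite_one [CompleteSpace K] {f : ι → K}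
    (hf : Tendsto f cofinite (𝓝 1)) : Multipliable f := by
  have htail : ∀ {δ : ℝ} {S : Finset ι}, 0 ≤ δ → δ ≤ 1 → (∀ i ∉ S, ‖f i - 1‖ ≤ δ) →
      ∀ T : Finset ι, ‖∏ i ∈ T \ S, f i - 1‖ ≤ δ := fun hδ0 hδ1 hS T =>
    norm_prod_sub_one_le hδ0 hδ1 _ fun i hi => hS i (Finset.mem_sdiff.1 hi).2
  obtain ⟨S₀, hS₀⟩ := exists_finset_forall_norm_sub_le hf one_pos
  set C := ‖∏ i ∈ S₀, f i‖
  have hbound : ∀ N, S₀ ⊆ N → ‖∏ i ∈ N, f i‖ ≤ C := fun N hN => by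
    rw [← Finset.prod_sdiff hN]
    exact (norm_mul_le _ _).trans (mul_le_of_le_one_left (norm_nonneg _)
      (norm_le_one_of_norm_sub_one_le_one (htail zero_le_one le_rfl hS₀ N)))
  refine cauchySeq_tendsto_of_complete (Metric.cauchySeq_iff'.2 fun ε hε => ?_)
  set δ := min 1 (ε / (C + 1))
  obtain ⟨S, hS⟩ := exists_finset_forall_norm_sub_le hf (show 0 < δ by positivity)
  refine ⟨S₀ ∪ S, fun F hF => ?_⟩
  rw [dist_eq_norm, ← Finset.prod_sdiff hF, mul_comm, ← mul_sub_one]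
  calc ‖(∏ i ∈ S₀ ∪ S, f i) * (∏ i ∈ F \ (S₀ ∪ S), f i - 1)‖
        ≤ ‖∏ i ∈ S₀ ∪ S, f i‖ * ‖∏ i ∈ F \ (S₀ ∪ S), f i - 1‖ := norm_mul_le _ _
    _ ≤ C * δ := mul_le_mul (hbound _ Finset.subset_union_left)
          (htail (by positivity) (min_le_left _ _)
            (fun i hi => hS i fun h => hi (Finset.mem_union_right _ h)) F)
          (norm_nonneg _) (norm_nonneg _)
    _ ≤ C * (ε / (C + 1)) := by gcongr; exact min_le_right _ _
    _ < ε := by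
        rw [← mul_div_assoc, div_lt_iff₀ (by positivity)]
        nlinarith

end NormedCommRing

lemma tprod_ne_zero_of_tendsto_cofinite_one {ι K : Type*} [NormedField K] [IsUltrametricDist K]
    [CompleteSpace K] {f : ι → K} (hf : Tendsto f cofinite (𝓝 1)) (h0 : ∀ i, f i ≠ 0) :
    ∏' i, f i ≠ 0 := by
  have hinv : Tendsto (fun i => (f i)⁻¹) cofinite (𝓝 1) := by simpa using hf.inv₀ one_ne_zero
  have h := (multipliable_of_tendsto_cofinite_one hf).tprod_mul
    (multipliable_of_tendsto_cofinite_one hinv)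
  simp only [mul_inv_cancel₀ (h0 _), tprod_one] at h
  exact left_ne_zero_of_mul_eq_one h.symm

end IsUltrametricDist

lemma tendsto_one_add_div_add_of_tendsto_cobounded {ι K : Type*} [NormedField K] {l : Filter ι}
    {x : ι → K} (hx : Tendsto x l (cobounded K)) (v w : K) :
    Tendsto (fun i => 1 + v / (w + x i)) l (𝓝 1) := by
  have h : Tendsto (fun i => (w + x i)⁻¹) l (𝓝 0) :=
    tendsto_inv₀_cobounded.comp ((tendsto_const_add_cobounded w).comp hx)
  simpa [div_eq_mul_inv] using (h.const_mul v).const_add 1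

lemma multipliable_one_add_div_add_of_tendsto_cobounded {ι K : Type*} [NormedField K]
    [IsUltrametricDist K] [CompleteSpace K] {x : ι → K} (hx : Tendsto x cofinite (cobounded K))
    (v w : K) : Multipliable fun i => 1 + v / (w + x i) :=
  IsUltrametricDist.multipliable_of_tendsto_cofinite_one
    (tendsto_one_add_div_add_of_tendsto_cobounded hx v w)

section CosetProd

variable {K S : Type*} [NormedField K] [SetLike S K] [AddSubgroupClass S K]

/-- `∏_{μ ∈ w + Λ} (1 + v / μ)`; a factor with `μ = 0` is `1 + v / 0 = 1`. -/
def cosetProd (Λ : S) (v w : K) : K := ∏' l : Λ, (1 + v / (w + l))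

lemma cosetProd_ne_zero [IsUltrametricDist K] [CompleteSpace K] {Λ : S}
    (hΛ : Tendsto ((↑) : Λ → K) cofinite (cobounded K)) {v w : K}
    (hvw : v + w ∉ Λ) : cosetProd Λ v w ≠ 0 := by
  refine IsUltrametricDist.tprod_ne_zero_of_tendsto_cofinite_one
    (tendsto_one_add_div_add_of_tendsto_cobounded hΛ v w) fun l => ?_
  rcases eq_or_ne (w + l) 0 with hl | hl
  · simp [hl]
  · rw [one_add_div hl]
    refine div_ne_zero (fun h => hvw ?_) hl
    rw [show v + w = -l by linear_combination h]
    exact neg_mem l.2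

end CosetProd

section Lattice

variable {F K : Type*} [Field F] [NormedField K] [Algebra (Polynomial F) K]
  {Λ Λ' : Submodule (Polynomial F) K}

lemma IsLatticeOfRank.tendsto_cobounded {r : ℕ} (hΛ : IsLatticeOfRank r Λ) :
    Tendsto ((↑) : Λ → K) cofinite (cobounded K) := by
  rw [← comap_norm_atTop, tendsto_comap_iff, tendsto_atTop]
  intro B
  rw [eventually_cofinite]
  exact ((hΛ.2 B).preimage Subtype.val_injective.injOn).subset fun l hl => ⟨l.2, (not_le.1 hl).le⟩

lemma latExp_eq_mul_cosetProd (Λ : Submodule (Polynomial F) K) (z : K) :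
    latExp Λ z = z * cosetProd Λ z 0 := by
  have hneg : Function.Injective fun l : {x : K // x ∈ Λ ∧ x ≠ 0} => (⟨-l, neg_mem l.2.1⟩ : Λ) :=
    fun a b h => Subtype.ext (neg_injective (congrArg Subtype.val h))
  rw [latExp, cosetProd, ← hneg.tprod_eq]
  · simp [sub_eq_add_neg, div_neg]
  · intro l hl
    have hl0 : (l : K) ≠ 0 := fun h => hl (by simp [h])
    exact ⟨⟨-l, neg_mem l.2, neg_ne_zero.2 hl0⟩, Subtype.ext (neg_neg _)⟩

lemma IsRepSet.notMem_of_mem_erase {R : Finset K} (hR : IsRepSet Λ Λ' R) (h0 : (0 : K) ∈ R)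
    {w : K} (hw : w ∈ R.erase 0) : w ∉ Λ := by
  intro hwΛ
  obtain ⟨hw0, hwR⟩ := Finset.mem_erase.1 hw
  obtain ⟨u, -, hu⟩ := hR.2 w (hR.1 w hwR)
  exact hw0 ((hu w ⟨hwR, by simp⟩).trans (hu 0 ⟨h0, by simpa using hwΛ⟩).symm)

lemma IsRepSet.bijective_add {R : Finset K} (hR : IsRepSet Λ Λ' R) (hle : Λ ≤ Λ') :
    Function.Bijective fun p : R × Λ =>
      (⟨p.1 + p.2, Λ'.add_mem (hR.1 _ p.1.2) (hle p.2.2)⟩ : Λ') := by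
  constructor
  · rintro ⟨w, l⟩ ⟨w', l'⟩ h
    have hsum : (w : K) + l = w' + l' := congrArg Subtype.val h
    obtain ⟨u, -, hu⟩ := hR.2 _ (Λ'.add_mem (hR.1 _ w.2) (hle l.2))
    have hw : w = w' := Subtype.ext <| (hu w ⟨w.2, by simp⟩).trans
      (hu w' ⟨w'.2, by simp [hsum]⟩).symm
    subst hw
    exact Prod.ext rfl (Subtype.ext (add_left_cancel hsum))
  · rintro ⟨y, hy⟩
    obtain ⟨u, ⟨huR, huΛ⟩, -⟩ := hR.2 y hy
    exact ⟨(⟨u, huR⟩, ⟨y - u, huΛ⟩), Subtype.ext (add_sub_cancel u y)⟩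

variable [IsUltrametricDist K] [CompleteSpace K]

lemma latExp_ne_zero (hΛ : Tendsto ((↑) : Λ → K) cofinite (cobounded K)) {w : K} (hw : w ∉ Λ) :
    latExp Λ w ≠ 0 := by
  rw [latExp_eq_mul_cosetProd]
  exact mul_ne_zero (fun h => hw (h ▸ Λ.zero_mem)) (cosetProd_ne_zero hΛ (by rwa [add_zero]))

lemma latExp_add_eq_mul_cosetProd (hΛ : Tendsto ((↑) : Λ → K) cofinite (cobounded K))
    {v w : K} (hw : w ∉ Λ) : latExp Λ (v + w) = latExp Λ w * cosetProd Λ v w := by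
  have hw0 : w ≠ 0 := fun h => hw (h ▸ Λ.zero_mem)
  -- the factor `1 + v / w` of `cosetProd Λ v w` at `λ = 0` has no counterpart on the left
  have hfactor : ∀ l : Λ, (1 + (v + w) / (0 + l)) * (if l = 0 then 1 + v / w else 1)
      = (1 + w / (0 + l)) * (1 + v / (w + l)) := by
    intro l
    rcases eq_or_ne l 0 with rfl | hl
    · simp
    have hl' : (l : K) ≠ 0 := fun h => hl (Subtype.ext h)
    have hwl : w + l ≠ 0 := fun h => hw (by
      rw [show w = -l by linear_combination h]; exact neg_mem l.2)
    rw [if_neg hl, zero_add, mul_one, one_add_div hl', one_add_div hl', one_add_div hwl,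
      div_mul_div_comm, div_eq_div_iff hl' (mul_ne_zero hl' hwl)]
    ring
  have hsplit : cosetProd Λ (v + w) 0 * (1 + v / w) = cosetProd Λ w 0 * cosetProd Λ v w := by
    have hm := multipliable_one_add_div_add_of_tendsto_cobounded hΛ
    rw [cosetProd, cosetProd, cosetProd, ← (hasProd_ite_eq (0 : Λ) (1 + v / w)).tprod_eq,
      ← (hm _ _).tprod_mul (hasProd_ite_eq _ _).multipliable, ← (hm _ _).tprod_mul (hm _ _)]
    exact tprod_congr hfactor
  rw [latExp_eq_mul_cosetProd, latExp_eq_mul_cosetProd, mul_assoc, ← hsplit,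
    show v + w = w * (1 + v / w) by field_simp; ring]
  ring

lemma IsRepSet.cosetProd_eq_prod (hΛ : Tendsto ((↑) : Λ → K) cofinite (cobounded K))
    (hΛ' : Tendsto ((↑) : Λ' → K) cofinite (cobounded K)) (hle : Λ ≤ Λ') {R : Finset K}
    (hR : IsRepSet Λ Λ' R) (v : K) : cosetProd Λ' v 0 = ∏ w ∈ R, cosetProd Λ v w := by
  let e : R × Λ ≃ Λ' := Equiv.ofBijective _ (hR.bijective_add hle)
  have hfiber : ∀ w : R, Multipliable fun l : Λ => 1 + v / (0 + (e (w, l) : K)) := fun w => by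
    simpa only [e, Equiv.ofBijective_apply, zero_add]
      using multipliable_one_add_div_add_of_tendsto_cobounded hΛ v w
  have hmult : Multipliable fun p : R × Λ => 1 + v / (0 + (e p : K)) :=
    (e.multipliable_iff (f := fun μ : Λ' => 1 + v / (0 + (μ : K)))).2
      (multipliable_one_add_div_add_of_tendsto_cobounded hΛ' v 0)
  rw [cosetProd, ← e.tprod_eq, hmult.tprod_prod' hfiber, tprod_fintype,
    ← Finset.prod_coe_sort R]
  simp only [e, Equiv.ofBijective_apply, zero_add, cosetProd]

end Lattice

theorem statement4_general
    (hna : ∀ x y : L, ‖x + y‖ ≤ max ‖x‖ ‖y‖)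
    (r : ℕ)
    (Λ Λ' : Submodule (Polynomial Fq) L)
    (hΛ : IsLatticeOfRank r Λ) (hΛ' : IsLatticeOfRank r Λ') (hle : Λ ≤ Λ')
    (R : Finset L) (hR : IsRepSet Λ Λ' R) (h0 : (0 : L) ∈ R)
    (v : L) :
    (∏ w ∈ R.erase 0, latExp Λ w)⁻¹ * ∏ w ∈ R, latExp Λ (v + w) = latExp Λ' v := by
  have := IsUltrametricDist.isUltrametricDist_of_forall_norm_add_le_max_norm hna
  have hdΛ := hΛ.tendsto_cobounded
  have hnotMem : ∀ w ∈ R.erase 0, w ∉ Λ := fun w hw => hR.notMem_of_mem_erase h0 hw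
  have hD : ∏ w ∈ R.erase 0, latExp Λ w ≠ 0 :=
    Finset.prod_ne_zero_iff.2 fun w hw => latExp_ne_zero hdΛ (hnotMem w hw)
  rw [inv_mul_eq_iff_eq_mul₀ hD, ← Finset.mul_prod_erase R _ h0, add_zero,
    Finset.prod_congr rfl fun w hw => latExp_add_eq_mul_cosetProd hdΛ (hnotMem w hw),
    Finset.prod_mul_distrib, latExp_eq_mul_cosetProd, latExp_eq_mul_cosetProd,
    hR.cosetProd_eq_prod hdΛ hΛ'.tendsto_cobounded hle, ← Finset.mul_prod_erase R _ h0]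
  ring

/-- The distribution relation for division values: for a lattice pair
`Λ ⊆ Λ'` with `K·Λ = K·Λ'`, a complete set `R` of representatives of `Λ'/Λ` with `0 ∈ R`,
and `v ∈ K·Λ ∖ Λ'`, one has `Δ^{Λ'|Λ}·∏_{w ∈ R} e^Λ(v + w) = e^{Λ'}(v)`, where
`Δ^{Λ'|Λ} = (∏_{0 ≠ w ∈ R} e^Λ(w))⁻¹`. -/
theorem statement4
    (q : ℕ) (hq : Fintype.card Fq = q)
    (hna : ∀ x y : L, ‖x + y‖ ≤ max ‖x‖ ‖y‖)
    (hA : ∀ a : Polynomial Fq, a ≠ 0 →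
      ‖algebraMap (Polynomial Fq) L a‖ = (q : ℝ) ^ a.natDegree)
    (hval : ∀ x : L, x ≠ 0 → ∃ s : ℚ, ‖x‖ = (q : ℝ) ^ (s : ℝ))
    (r : ℕ)
    (Λ Λ' : Submodule (Polynomial Fq) L)
    (hΛ : IsLatticeOfRank r Λ) (hΛ' : IsLatticeOfRank r Λ') (hle : Λ ≤ Λ')
    (hKeq : ∀ u : L, InKSpan Λ u ↔ InKSpan Λ' u)
    (R : Finset L) (hR : IsRepSet Λ Λ' R) (h0 : (0 : L) ∈ R)
    (v : L) (hv : InKSpan Λ v) (hv' : v ∉ Λ') :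
    (∏ w ∈ R.erase 0, latExp Λ w)⁻¹ * ∏ w ∈ R, latExp Λ (v + w) = latExp Λ' v :=
  statement4_general hna r Λ Λ' hΛ hΛ' hle R hR h0 v
end
end

section
/- Let Λ be an A-lattice of rank r in L and u ∈ K·Λ. Then there exists n ∈ ℕ such that the support of Z_{u,Λ} is contained in (1/n)·ℤ, and the Hahn series (1 − q^r·S)·Z_{u,Λ} has finite support; equivalently, Z_{u,Λ} is a rational function of S^{1/n} whose only denominator is 1 − q^r·S. -/
open scoped Classical

noncomputable section

variable {Fq : Type*} [Field Fq] [Fintype Fq]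
variable {L : Type*} [NormedField L] [CompleteSpace L]
variable [Algebra (Polynomial Fq) L]

/-- The coefficient of `S^x` in the `Z`-function `Z_{u,Λ}`:
the number of `λ ∈ u + Λ`, `λ ≠ 0`, with `log λ = x`. -/
def zCoef (q : ℕ) (Λ : Submodule (Polynomial Fq) L) (u : L) (x : ℚ) : ℕ :=
  Nat.card {l : L | l ≠ 0 ∧ l - u ∈ Λ ∧ logq q l = (x : ℝ)}

/-! Once the radius `ρ = q^x` exceeds `‖u‖` and the norms of a basis `b` of `Λ`, the coefficient
of `S^x` counts the points of `Λ` on the sphere of radius `ρ`: in an ultrametric space translation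
by `u` preserves that sphere. Every lattice point is uniquely `X • μ + ∑ cᵢ • bᵢ` with `μ ∈ Λ` and
`cᵢ ∈ 𝔽_q`, and the second summand, being shorter than `ρ`, does not change the norm; so the
count on the sphere of radius `q ρ` is `q^r` times the count on the sphere of radius `ρ`. Hence
the coefficients eventually satisfy `a_x = q^r a_{x-1}`. Since only finitely many support points
lie below any bound, `(1 - q^r S) Z` has finite support, and every support point is an integer
translate of one of the finitely many small ones, which bounds the denominators. -/

open Polynomial

def Polynomial.piEquivDivXCoeffZero {R : Type*} [Semiring R] (ι : Type*) :
    (ι → R[X]) ≃ (ι → R[X]) × (ι → R) where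
  toFun g := (fun i => (g i).divX, fun i => (g i).coeff 0)
  invFun p i := X * p.1 i + C (p.2 i)
  left_inv g := _root_.funext fun i => X_mul_divX_add (g i)
  right_inv p := by
    ext i n <;> simp [divX_add, coeff_X_mul]

section SpanCount

variable {R M ι : Type*} [Fintype ι]

theorem LinearIndependent.card_mem_span_and [Semiring R] [AddCommMonoid M] [Module R M]
    {b : ι → M} (hb : LinearIndependent R b) (p : M → Prop) :
    Nat.card {l | l ∈ Submodule.span R (Set.range b) ∧ p l} =
      Nat.card {g : ι → R | p (∑ i, g i • b i)} := by
  rw [← Nat.card_image_of_injective hb.fintypeLinearCombination_injective]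
  congr! 2
  ext l
  simp only [Set.mem_ofPred_eq, Set.mem_image, Fintype.linearCombination_apply,
    Submodule.mem_span_range_iff_exists_fun]
  constructor
  · rintro ⟨⟨g, rfl⟩, hl⟩
    exact ⟨g, hl, rfl⟩
  · rintro ⟨g, hg, rfl⟩
    exact ⟨⟨g, rfl⟩, hg⟩

theorem LinearIndependent.card_mem_span_and_eq_card_X_smul_mul [Semiring R] [Fintype R]
    [AddCommMonoid M] [Module R[X] M] {b : ι → M} (hb : LinearIndependent R[X] b) (p : M → Prop)
    (hp : ∀ (c : ι → R) (y : M), p (y + ∑ i, C (c i) • b i) ↔ p y) :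
    Nat.card {l | l ∈ Submodule.span R[X] (Set.range b) ∧ p l} =
      Nat.card {l | l ∈ Submodule.span R[X] (Set.range b) ∧ p ((X : R[X]) • l)} *
        Fintype.card R ^ Fintype.card ι := by
  rw [LinearIndependent.card_mem_span_and hb, LinearIndependent.card_mem_span_and hb]
  have hsplit : ∀ (g : ι → R[X]) (c : ι → R),
      ∑ i, (X * g i + C (c i)) • b i = (X : R[X]) • ∑ i, g i • b i + ∑ i, C (c i) • b i := by
    intro g c
    simp only [add_smul, mul_smul, Finset.sum_add_distrib, Finset.smul_sum]
  calc Nat.card {g : ι → R[X] | p (∑ i, g i • b i)}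
      = Nat.card {gc : (ι → R[X]) × (ι → R) | p ((X : R[X]) • ∑ i, gc.1 i • b i)} :=
        Nat.card_congr <| ((piEquivDivXCoeffZero ι).symm.subtypeEquiv fun gc => by
          simp [piEquivDivXCoeffZero, hsplit, hp]).symm
    _ = Nat.card {g : ι → R[X] | p ((X : R[X]) • ∑ i, g i • b i)} * Nat.card (ι → R) := by
        rw [← Nat.card_prod]
        exact Nat.card_congr <| Equiv.prodSubtypeFstEquivSubtypeProd
          (p := fun g : ι → R[X] => p ((X : R[X]) • ∑ i, g i • b i))
    _ = _ := by rw [Nat.card_eq_fintype_card (α := ι → R), Fintype.card_fun]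

end SpanCount

theorem IsUltrametricDist.norm_add_eq_iff_of_norm_lt {E : Type*} [SeminormedAddCommGroup E]
    [IsUltrametricDist E] {v : E} {ρ : ℝ} (hv : ‖v‖ < ρ) (y : E) : ‖y + v‖ = ρ ↔ ‖y‖ = ρ := by
  constructor
  · intro h
    have hne : ‖y + v‖ ≠ ‖-v‖ := by rw [norm_neg, h]; exact hv.ne'
    rw [← add_neg_cancel_right y v, norm_add_eq_max_of_norm_ne_norm hne, h, norm_neg,
      max_eq_left hv.le]
  · intro h
    rw [norm_add_eq_max_of_norm_ne_norm (h ▸ hv.ne'), h, max_eq_left hv.le]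

theorem card_coset_sphere_eq {E : Type*} [SeminormedAddCommGroup E] [IsUltrametricDist E]
    (Λ : Set E) {u : E} {ρ : ℝ} (hu : ‖u‖ < ρ) :
    Nat.card {l | l - u ∈ Λ ∧ ‖l‖ = ρ} = Nat.card {l | l ∈ Λ ∧ ‖l‖ = ρ} :=
  Nat.card_congr <| (Equiv.subRight u).subtypeEquiv fun l => by
    simp [sub_eq_add_neg, IsUltrametricDist.norm_add_eq_iff_of_norm_lt ((norm_neg u).trans_lt hu)]

theorem finite_coset_closedBall {E : Type*} [SeminormedAddCommGroup E] {Λ : Set E}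
    (hΛ : ∀ B : ℝ, {x | x ∈ Λ ∧ ‖x‖ ≤ B}.Finite) (u : E) (B : ℝ) :
    {l | l - u ∈ Λ ∧ ‖l‖ ≤ B}.Finite := by
  refine ((hΛ (B + ‖u‖)).image (· + u)).subset fun l ⟨hl, hlB⟩ =>
    ⟨l - u, ⟨hl, (norm_sub_le l u).trans (by linarith)⟩, sub_add_cancel l u⟩

section FunctionField

variable {F : Type*} [Field F] {E : Type*} [NormedField E] [Algebra F[X] E]

theorem zCoef_eq_card_coset_sphere {q : ℕ} (hq : 1 < q) (Λ : Submodule F[X] E) (u : E) (x : ℚ) :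
    zCoef q Λ u x = Nat.card {l | l - u ∈ Λ ∧ ‖l‖ = (q : ℝ) ^ (x : ℝ)} := by
  have hq0 : (0 : ℝ) < q := by positivity
  have hq1 : (q : ℝ) ≠ 1 := by exact_mod_cast hq.ne'
  rw [zCoef]
  congr! 2
  ext l
  simp only [Set.mem_ofPred_eq, logq]
  constructor
  · rintro ⟨hl0, hlu, hlx⟩
    exact ⟨hlu, ((Real.logb_eq_iff_rpow_eq hq0 hq1 (norm_pos_iff.2 hl0)).1 hlx).symm⟩
  · rintro ⟨hlu, hlx⟩
    have hl : 0 < ‖l‖ := hlx ▸ Real.rpow_pos_of_pos hq0 _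
    exact ⟨norm_pos_iff.1 hl, hlu, (Real.logb_eq_iff_rpow_eq hq0 hq1 hl).2 hlx.symm⟩

theorem zCoef_eq_card_sphere [IsUltrametricDist E] {q : ℕ} (hq : 1 < q) (Λ : Submodule F[X] E)
    {u : E} {x : ℚ} (hu : ‖u‖ < (q : ℝ) ^ (x : ℝ)) :
    zCoef q Λ u x = Nat.card {l | l ∈ Λ ∧ ‖l‖ = (q : ℝ) ^ (x : ℝ)} :=
  (zCoef_eq_card_coset_sphere hq Λ u x).trans (card_coset_sphere_eq (Λ : Set E) hu)

theorem finite_setOf_zCoef_ne_zero_le {q : ℕ} (hq : 1 < q) {Λ : Submodule F[X] E}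
    (hΛ : ∀ B : ℝ, {x : E | x ∈ Λ ∧ ‖x‖ ≤ B}.Finite) (u : E) (c : ℚ) :
    {x : ℚ | zCoef q Λ u x ≠ 0 ∧ x ≤ c}.Finite := by
  have hq' : (1 : ℝ) < q := by exact_mod_cast hq
  refine (((finite_coset_closedBall (Λ := (Λ : Set E)) hΛ u ((q : ℝ) ^ (c : ℝ))).image
    (logq q)).preimage Rat.cast_injective.injOn).subset ?_
  rintro x ⟨hx, hxc⟩
  rw [zCoef_eq_card_coset_sphere hq] at hx
  obtain ⟨⟨l, hlu, hl⟩⟩ := (Nat.card_ne_zero.1 hx).1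
  refine ⟨l, ⟨hlu, ?_⟩, ?_⟩
  · rw [hl]
    exact Real.rpow_le_rpow_of_exponent_le hq'.le (by exact_mod_cast hxc)
  · rw [logq, hl, Real.logb_rpow (by positivity) hq'.ne']

section Scaling

variable [Fintype F] [IsUltrametricDist E] {q : ℕ} {ι : Type*} [Fintype ι] {b : ι → E}

theorem card_span_sphere_mul_eq (hq : Fintype.card F = q)
    (hX : ∀ z : E, ‖(X : F[X]) • z‖ = q * ‖z‖) (hC : ∀ (c : F) (z : E), ‖C c • z‖ ≤ ‖z‖)
    (hb : LinearIndependent F[X] b) {ρ : ℝ} (hρ : 0 < ρ) (hbρ : ∀ i, ‖b i‖ ≤ ρ) :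
    Nat.card {l | l ∈ Submodule.span F[X] (Set.range b) ∧ ‖l‖ = q * ρ} =
      Nat.card {l | l ∈ Submodule.span F[X] (Set.range b) ∧ ‖l‖ = ρ} * q ^ Fintype.card ι := by
  have hq' : (1 : ℝ) < q := by exact_mod_cast hq ▸ Fintype.one_lt_card
  have hν : ∀ c : ι → F, ‖∑ i, C (c i) • b i‖ < q * ρ := fun c =>
    (IsUltrametricDist.norm_sum_le_of_forall_le_of_nonneg hρ.le
      fun i _ => (hC _ _).trans (hbρ i)).trans_lt (lt_mul_of_one_lt_left hρ hq')
  have hcount := LinearIndependent.card_mem_span_and_eq_card_X_smul_mul hb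
    (fun y => ‖y‖ = q * ρ) fun c y => IsUltrametricDist.norm_add_eq_iff_of_norm_lt (hν c) y
  simpa only [hq, hX, mul_right_inj' (show (q : ℝ) ≠ 0 by positivity)] using hcount

theorem exists_zCoef_eq_pow_mul_zCoef_sub_one (hq : Fintype.card F = q)
    (hX : ∀ z : E, ‖(X : F[X]) • z‖ = q * ‖z‖) (hC : ∀ (c : F) (z : E), ‖C c • z‖ ≤ ‖z‖)
    (hb : LinearIndependent F[X] b) (u : E) :
    ∃ x₀ : ℚ, ∀ x, x₀ ≤ x → zCoef q (Submodule.span F[X] (Set.range b)) u x =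
      q ^ Fintype.card ι * zCoef q (Submodule.span F[X] (Set.range b)) u (x - 1) := by
  have hq1 : 1 < q := hq ▸ Fintype.one_lt_card
  have hq' : (1 : ℝ) < q := by exact_mod_cast hq1
  set B := ‖u‖ + ∑ i, ‖b i‖
  have huB : ‖u‖ ≤ B := le_add_of_nonneg_right (Finset.sum_nonneg fun i _ => norm_nonneg _)
  have hbB : ∀ i, ‖b i‖ ≤ B := fun i =>
    (Finset.single_le_sum (fun j _ => norm_nonneg (b j)) (Finset.mem_univ i)).trans
      (le_add_of_nonneg_left (norm_nonneg u))
  obtain ⟨m, hm⟩ := pow_unbounded_of_one_lt B hq'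
  refine ⟨m + 1, fun x hx => ?_⟩
  have hρ : (q : ℝ) ^ (x : ℝ) = q * (q : ℝ) ^ ((x - 1 : ℚ) : ℝ) := by
    rw [Rat.cast_sub, Rat.cast_one, Real.rpow_sub_one (by positivity),
      mul_div_cancel₀ _ (by positivity)]
  have hBρ : B < (q : ℝ) ^ ((x - 1 : ℚ) : ℝ) := hm.trans_le <| by
    have hx' : (m : ℝ) + 1 ≤ x := by exact_mod_cast hx
    rw [← Real.rpow_natCast]
    exact Real.rpow_le_rpow_of_exponent_le hq'.le (by push_cast; linarith)
  have hBqρ : B < (q : ℝ) ^ (x : ℝ) :=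
    hρ ▸ hBρ.trans_le (le_mul_of_one_le_left (by positivity) hq'.le)
  rw [zCoef_eq_card_sphere hq1 _ (huB.trans_lt hBqρ), zCoef_eq_card_sphere hq1 _ (huB.trans_lt hBρ),
    hρ, card_span_sphere_mul_eq hq hX hC hb ((norm_nonneg u).trans_lt (huB.trans_lt hBρ))
      fun i => (hbB i).trans hBρ.le, mul_comm]

end Scaling

end FunctionField

section Recursion

variable {R : Type*} {f : ℚ → R} {a : R} {x₀ : ℚ}

theorem exists_nat_sub_of_recursion [MulZeroClass R] (hrec : ∀ x, x₀ ≤ x → f x = a * f (x - 1))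
    {x : ℚ} (hx : f x ≠ 0) : ∃ j : ℕ, f (x - j) ≠ 0 ∧ x - j ≤ x₀ := by
  obtain ⟨m, hm⟩ := exists_nat_ge (x - x₀)
  induction m generalizing x with
  | zero => exact ⟨0, by simpa using hx, by simpa using hm⟩
  | succ m ih =>
    by_cases hle : x ≤ x₀
    · exact ⟨0, by simpa using hx, by simpa using hle⟩
    have hx1 : f (x - 1) ≠ 0 := fun h => hx (by rw [hrec x (not_le.1 hle).le, h, mul_zero])
    obtain ⟨j, hj, hjx⟩ := ih hx1 (by push_cast at hm; linarith)
    exact ⟨j + 1, by push_cast; rwa [← sub_sub, sub_right_comm], by push_cast; linarith⟩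

theorem exists_den_of_recursion [MulZeroClass R] (hrec : ∀ x, x₀ ≤ x → f x = a * f (x - 1))
    (hfin : {x | f x ≠ 0 ∧ x ≤ x₀}.Finite) :
    ∃ n : ℕ, 0 < n ∧ ∀ x, f x ≠ 0 → ∃ k : ℤ, x = k / n := by
  set n := ∏ y ∈ hfin.toFinset, y.den
  have hn : 0 < n := Finset.prod_pos fun y _ => y.den_pos
  refine ⟨n, hn, fun x hx => ?_⟩
  obtain ⟨j, hj⟩ := exists_nat_sub_of_recursion hrec hx
  obtain ⟨t, ht⟩ : (x - j).den ∣ n := Finset.dvd_prod_of_mem Rat.den (hfin.mem_toFinset.2 hj)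
  refine ⟨(x - j).num * t + j * n, ?_⟩
  rw [eq_div_iff (by exact_mod_cast hn.ne')]
  push_cast
  rw [← Rat.mul_den_eq_num, ht]
  push_cast
  ring

theorem finite_setOf_sub_mul_ne_zero [Ring R] (hrec : ∀ x, x₀ ≤ x → f x = a * f (x - 1))
    (hfin : {x | f x ≠ 0 ∧ x ≤ x₀}.Finite) : {x | f x - a * f (x - 1) ≠ 0}.Finite := by
  refine (hfin.union (hfin.image (· + 1))).subset fun x hx => ?_
  by_cases hle : x₀ ≤ x
  · exact absurd (sub_eq_zero.2 (hrec x hle)) hx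
  by_cases hfx : f x = 0
  · refine Or.inr ⟨x - 1, ⟨fun h => hx (by rw [hfx, h, mul_zero, sub_zero]), ?_⟩,
      sub_add_cancel x 1⟩
    linarith [not_le.1 hle]
  · exact Or.inl ⟨hfx, (not_le.1 hle).le⟩

end Recursion

theorem statement6_general
    (q : ℕ) (hq : Fintype.card Fq = q)
    (hna : ∀ x y : L, ‖x + y‖ ≤ max ‖x‖ ‖y‖)
    (hA : ∀ a : Polynomial Fq, a ≠ 0 →
      ‖algebraMap (Polynomial Fq) L a‖ = (q : ℝ) ^ a.natDegree)
    (r : ℕ)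
    (Λ : Submodule (Polynomial Fq) L) (hΛ : IsLatticeOfRank r Λ)
    (u : L) :
    ∃ n : ℕ, 0 < n ∧
      (∀ x : ℚ, zCoef q Λ u x ≠ 0 → ∃ k : ℤ, x = (k : ℚ) / n) ∧
      {x : ℚ | (zCoef q Λ u x : ℤ) - (q : ℤ) ^ r * zCoef q Λ u (x - 1) ≠ 0}.Finite := by
  have : IsUltrametricDist L := .isUltrametricDist_of_forall_norm_add_le_max_norm hna
  obtain ⟨⟨b, hb, rfl⟩, hdisc⟩ := hΛ
  have hX : ∀ z : L, ‖(X : Fq[X]) • z‖ = q * ‖z‖ := fun z => by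
    rw [Algebra.smul_def, norm_mul, hA X X_ne_zero, natDegree_X, pow_one]
  have hC : ∀ (c : Fq) (z : L), ‖C c • z‖ ≤ ‖z‖ := fun c z => by
    rcases eq_or_ne c 0 with rfl | hc
    · simp
    · rw [Algebra.smul_def, norm_mul, hA _ (C_ne_zero.2 hc), natDegree_C, pow_zero, one_mul]
  obtain ⟨x₀, hrec⟩ := exists_zCoef_eq_pow_mul_zCoef_sub_one hq hX hC hb u
  set f : ℚ → ℤ := fun x => zCoef q (Submodule.span Fq[X] (Set.range b)) u x
  have hrecf : ∀ x, x₀ ≤ x → f x = (q : ℤ) ^ r * f (x - 1) := fun x hx => by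
    simp [f, hrec x hx]
  have hfin : {x | f x ≠ 0 ∧ x ≤ x₀}.Finite := by
    simpa [f] using finite_setOf_zCoef_ne_zero_le (hq ▸ Fintype.one_lt_card) hdisc u x₀
  obtain ⟨n, hn, hden⟩ := exists_den_of_recursion hrecf hfin
  exact ⟨n, hn, fun x hx => hden x (by simpa [f] using hx), finite_setOf_sub_mul_ne_zero hrecf hfin⟩

/-- The `Z`-function of a lattice is a rational function: its support is
contained in `(1/n)·ℤ` for some `n ∈ ℕ`, and `(1 - q^r·S)·Z_{u,Λ}` has finite support
(so `Z_{u,Λ}` is rational in `S^{1/n}` with only denominator `1 - q^r S`). -/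
theorem statement6
    (q : ℕ) (hq : Fintype.card Fq = q)
    (hna : ∀ x y : L, ‖x + y‖ ≤ max ‖x‖ ‖y‖)
    (hA : ∀ a : Polynomial Fq, a ≠ 0 →
      ‖algebraMap (Polynomial Fq) L a‖ = (q : ℝ) ^ a.natDegree)
    (hval : ∀ x : L, x ≠ 0 → ∃ s : ℚ, ‖x‖ = (q : ℝ) ^ (s : ℝ))
    (r : ℕ)
    (Λ : Submodule (Polynomial Fq) L) (hΛ : IsLatticeOfRank r Λ)
    (u : L) (hu : InKSpan Λ u) :
    ∃ n : ℕ, 0 < n ∧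
      (∀ x : ℚ, zCoef q Λ u x ≠ 0 → ∃ k : ℤ, x = (k : ℚ) / n) ∧
      {x : ℚ | (zCoef q Λ u x : ℤ) - (q : ℤ) ^ r * zCoef q Λ u (x - 1) ≠ 0}.Finite :=
  statement6_general q hq hna hA r Λ hΛ u
end
end

section
/- Let Λ be an A-lattice of rank r in L and u ∈ K·Λ, and let P_{u,Λ} := (1 − q^r·S)·Z_{u,Λ}, a Hahn series with finite support. Then the sum of all coefficients of P_{u,Λ} equals q^r − 1 if u ∈ Λ, and equals 0 if u ∉ Λ. (Equivalently, the value at S = 1 of the rational function Z_{u,Λ} is −1 if u ∈ Λ and 0 otherwise.) -/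
open scoped Classical

noncomputable section

variable {Fq : Type*} [Field Fq] [Fintype Fq]
variable {L : Type*} [NormedField L] [CompleteSpace L]
variable [Algebra (Polynomial Fq) L]

/-! The number `N(B)` of points of `u + Λ` of norm `≤ B` satisfies `N(qB) = q^r N(B)` as soon
as `B` dominates `‖u‖` and the norms of the representatives `∑ cᵢ bᵢ` (`c ∈ 𝔽_q^r`) of `Λ/TΛ`:
by the ultrametric inequality, writing `μ = ∑ cᵢ bᵢ + T ν` identifies the lattice points of
norm `≤ qB` with `𝔽_q^r` times those of norm `≤ B`. The same argument works for spheres, so the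
coefficients of `Z` satisfy `z(x) = q^r z(x - 1)` for large `x`. Hence `∑ₓ (z(x) - q^r z(x - 1))`
reduces to `∑_{x ≤ M} z(x) - q^r ∑_{x ≤ M - 1} z(x) = (N(q^M) - δ) - q^r (N(q^(M-1)) - δ)
= (q^r - 1) δ`, where `δ = 1` if `0 ∈ u + Λ` and `δ = 0` otherwise. -/

open Polynomial Set Function Submodule

section Ultrametric

variable {E : Type*} [SeminormedAddCommGroup E] [IsUltrametricDist E]

lemma norm_add_le_iff_of_norm_le {w : E} {B : ℝ} (hw : ‖w‖ ≤ B) (z : E) :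
    ‖w + z‖ ≤ B ↔ ‖z‖ ≤ B := by
  refine ⟨fun h => ?_, fun h => (IsUltrametricDist.norm_add_le_max w z).trans (max_le hw h)⟩
  simpa using (IsUltrametricDist.norm_add_le_max (w + z) (-w)).trans (max_le h (by simpa using hw))

lemma norm_add_eq_iff_of_norm_lt {w : E} {R : ℝ} (hw : ‖w‖ < R) (z : E) :
    ‖w + z‖ = R ↔ ‖z‖ = R := by
  refine ⟨fun h => ?_, fun h => ?_⟩
  · have hne : ‖w + z‖ ≠ ‖-w‖ := by rw [norm_neg, h]; exact hw.ne'
    simpa [h, hw.le] using IsUltrametricDist.norm_add_eq_max_of_norm_ne_norm hne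
  · rw [IsUltrametricDist.norm_add_eq_max_of_norm_ne_norm (h ▸ hw.ne), h, max_eq_right hw.le]

end Ultrametric

lemma natCard_coset_eq {G S : Type*} [AddCommGroup G] [SetLike S G] (Λ : S) (u : G)
    {P : G → Prop} (hP : ∀ l, P (l - u) ↔ P l) :
    Nat.card {l | l - u ∈ Λ ∧ P l} = Nat.card {μ | μ ∈ Λ ∧ P μ} :=
  Nat.card_congr
    { toFun l := ⟨l - u, l.2.1, (hP l).mpr l.2.2⟩
      invFun μ := ⟨μ + u, by simpa using μ.2.1, (hP (μ + u)).mp (by simpa using μ.2.2)⟩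
      left_inv l := by simp
      right_inv μ := by simp }

lemma finite_coset_inter_closedBall {G S : Type*} [SeminormedAddCommGroup G] [SetLike S G]
    {Λ : S} (hΛ : ∀ B, {μ | μ ∈ Λ ∧ ‖μ‖ ≤ B}.Finite) (u : G) (B : ℝ) :
    {l | l - u ∈ Λ ∧ ‖l‖ ≤ B}.Finite := by
  refine ((hΛ (B + ‖u‖)).preimage (f := (· - u)) sub_left_injective.injOn).subset fun l hl => ?_
  exact ⟨hl.1, (norm_sub_le l u).trans (by linarith [hl.2])⟩

lemma finsum_sub_mul_shift {G R : Type*} [AddCommGroup G] [LinearOrder G] [IsOrderedAddMonoid G]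
    [CommRing R] {f : G → R} {c : R} {t M : G} (hfin : ∀ Y, (Iic Y ∩ support f).Finite)
    (hrec : ∀ x, M < x → f x = c * f (x - t)) :
    ∑ᶠ x, (f x - c * f (x - t)) = ∑ᶠ x ∈ Iic M, f x - c * ∑ᶠ x ∈ Iic (M - t), f x := by
  set S := (Iic M ∩ support f) ∪ (· + t) '' (Iic (M - t) ∩ support f)
  have hS : S.Finite := (hfin M).union ((hfin (M - t)).image _)
  have hSM : S ⊆ Iic M := union_subset inter_subset_left <| by
    rintro _ ⟨y, ⟨hy, -⟩, rfl⟩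
    exact le_sub_iff_add_le.mp hy
  have restrict {s : Set G} (h : G → R) (hs : Iic M ⊆ s) (hh : s ∩ support h ⊆ S) :
      ∑ᶠ x ∈ S, h x = ∑ᶠ x ∈ s, h x :=
    finsum_mem_inter_support_eq _ _ _ <|
      subset_antisymm (inter_subset_inter_left _ (hSM.trans hs))
        (subset_inter hh inter_subset_right)
  have hshift : ∑ᶠ x ∈ Iic M, f (x - t) = ∑ᶠ x ∈ Iic (M - t), f x := by
    refine finsum_mem_eq_of_bijOn (· - t) ⟨fun x hx => ?_, sub_left_injective.injOn, fun y hy => ?_⟩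
      fun _ _ => rfl
    · exact sub_le_sub_right hx t
    · exact ⟨y + t, le_sub_iff_add_le.mp hy, add_sub_cancel_right y t⟩
  calc ∑ᶠ x, (f x - c * f (x - t))
      = ∑ᶠ x ∈ S, (f x - c * f (x - t)) := by
        rw [restrict _ (subset_univ _), finsum_mem_univ]
        rintro x ⟨-, hx⟩
        have hxM : x ≤ M := not_lt.mp fun h => hx (sub_eq_zero.mpr (hrec x h))
        by_cases hfx : f x = 0
        · refine Or.inr ⟨x - t, ⟨sub_le_sub_right hxM t, fun h => hx ?_⟩, sub_add_cancel x t⟩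
          simp [hfx, h]
        · exact Or.inl ⟨hxM, hfx⟩
    _ = ∑ᶠ x ∈ S, f x - c * ∑ᶠ x ∈ S, f (x - t) := by
        rw [finsum_mem_sub_distrib _ _ hS, mul_finsum_mem' _ _ hS]
    _ = ∑ᶠ x ∈ Iic M, f x - c * ∑ᶠ x ∈ Iic (M - t), f x := by
        rw [restrict f le_rfl subset_union_left, restrict (fun x => f (x - t)) le_rfl, hshift]
        rintro x ⟨hxM, hx⟩
        exact Or.inr ⟨x - t, ⟨sub_le_sub_right hxM t, hx⟩, sub_add_cancel x t⟩

lemma exists_rat_forall_lt_rpow {ι : Type*} [Finite ι] (f : ι → ℝ) {q : ℝ} (hq : 1 < q) :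
    ∃ M : ℚ, ∀ x : ℚ, M ≤ x → ∀ i, f i < q ^ (x : ℝ) := by
  obtain ⟨B, hB⟩ := (finite_range f).bddAbove
  obtain ⟨n, hn⟩ := pow_unbounded_of_one_lt B hq
  refine ⟨n, fun x hx i => ?_⟩
  calc f i ≤ B := hB (mem_range_self i)
    _ < q ^ ((n : ℚ) : ℝ) := by rwa [Rat.cast_natCast, Real.rpow_natCast]
    _ ≤ q ^ (x : ℝ) := Real.rpow_le_rpow_of_exponent_le hq.le (by exact_mod_cast hx)

def Polynomial.coeffZeroDivXEquiv (R : Type*) [Semiring R] : R × R[X] ≃ R[X] where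
  toFun x := C x.1 + X * x.2
  invFun p := (p.coeff 0, p.divX)
  left_inv := by
    rintro ⟨a, p⟩
    ext n <;> simp [divX_add, coeff_divX, coeff_X_mul]
  right_inv p := by simp only; rw [add_comm, X_mul_divX_add]

section Lattice

variable {F : Type*} [Field F] {E : Type*} [NormedField E] [Algebra F[X] E]
  {r : ℕ} {b : Fin r → E}

def spanCoeffZeroDivXEquiv (hb : LinearIndependent F[X] b) :
    (Fin r → F) × span F[X] (range b) ≃ span F[X] (range b) :=
  ((Equiv.refl _).prodCongr (Module.Basis.span hb).equivFun.toEquiv).trans <|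
    (Equiv.arrowProdEquivProdArrow _ _ _).symm.trans <|
      (Equiv.piCongrRight fun _ => coeffZeroDivXEquiv F).trans
        (Module.Basis.span hb).equivFun.symm.toEquiv

lemma coe_spanCoeffZeroDivXEquiv (hb : LinearIndependent F[X] b) (c : Fin r → F)
    (ν : span F[X] (range b)) :
    (spanCoeffZeroDivXEquiv hb (c, ν) : E) = ∑ i, C (c i) • b i + (X : F[X]) • (ν : E) := by
  have hν := congrArg Subtype.val ((Module.Basis.span hb).sum_equivFun ν)
  rw [AddSubmonoidClass.coe_finsetSum] at hν
  rw [← hν]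
  simp [spanCoeffZeroDivXEquiv, coeffZeroDivXEquiv, Module.Basis.span_apply, add_smul,
    Finset.sum_add_distrib, Finset.smul_sum, mul_smul]

lemma natCard_span_eq_pow_mul [Fintype F] (hb : LinearIndependent F[X] b) {P Q : E → Prop}
    (hPQ : ∀ (c : Fin r → F) (ν : E), P (∑ i, C (c i) • b i + (X : F[X]) • ν) ↔ Q ν) :
    Nat.card {μ | μ ∈ span F[X] (range b) ∧ P μ} =
      Fintype.card F ^ r * Nat.card {ν | ν ∈ span F[X] (range b) ∧ Q ν} := by
  let Λ := span F[X] (range b)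
  have e : {x : (Fin r → F) × Λ // Q x.2} ≃ {μ : Λ // P μ} :=
    (spanCoeffZeroDivXEquiv hb).subtypeEquiv fun x => by
      rw [coe_spanCoeffZeroDivXEquiv, hPQ]
  have e' : {x : (Fin r → F) × Λ // Q x.2} ≃ (Fin r → F) × {ν : Λ // Q ν} :=
    ((Equiv.prodComm (Fin r → F) Λ).subtypeEquiv (q := fun s => Q s.1) fun _ => Iff.rfl).trans
      ((Equiv.prodSubtypeFstEquivSubtypeProd (β := Fin r → F) (p := fun ν : Λ => Q ν)).trans
        (Equiv.prodComm _ _))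
  calc Nat.card {μ | μ ∈ Λ ∧ P μ} = Nat.card {μ : Λ // P μ} :=
        Nat.card_congr (Equiv.subtypeSubtypeEquivSubtypeInter _ _).symm
    _ = Nat.card ((Fin r → F) × {ν : Λ // Q ν}) := Nat.card_congr (e.symm.trans e')
    _ = Fintype.card F ^ r * Nat.card {ν | ν ∈ Λ ∧ Q ν} := by
        rw [Nat.card_prod, Nat.card_fun, Nat.card_eq_fintype_card, Nat.card_fin,
          Nat.card_congr (Equiv.subtypeSubtypeEquivSubtypeInter (· ∈ Λ) Q)]
        rfl

variable [Fintype F] [IsUltrametricDist E]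

lemma natCard_coset_closedBall_mul (hb : LinearIndependent F[X] b)
    (hX : ‖algebraMap F[X] E X‖ = Fintype.card F) {u : E} {B : ℝ} (hu : ‖u‖ ≤ B)
    (hw : ∀ c : Fin r → F, ‖∑ i, C (c i) • b i‖ ≤ Fintype.card F * B) :
    Nat.card {l | l - u ∈ span F[X] (range b) ∧ ‖l‖ ≤ Fintype.card F * B} =
      Fintype.card F ^ r * Nat.card {l | l - u ∈ span F[X] (range b) ∧ ‖l‖ ≤ B} := by
  have hq : (1 : ℝ) ≤ Fintype.card F := by exact_mod_cast Fintype.card_pos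
  have hu' : ‖-u‖ ≤ Fintype.card F * B := by
    rw [norm_neg]; exact hu.trans (le_mul_of_one_le_left ((norm_nonneg u).trans hu) hq)
  rw [natCard_coset_eq (span F[X] (range b)) u fun l => by
      rw [sub_eq_neg_add, norm_add_le_iff_of_norm_le hu'],
    natCard_coset_eq (span F[X] (range b)) u fun l => by
      rw [sub_eq_neg_add, norm_add_le_iff_of_norm_le (by rwa [norm_neg])]]
  refine natCard_span_eq_pow_mul hb fun c ν => ?_
  rw [norm_add_le_iff_of_norm_le (hw c), Algebra.smul_def, norm_mul, hX,
    mul_le_mul_iff_right₀ (by linarith)]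

lemma natCard_coset_sphere_mul (hb : LinearIndependent F[X] b)
    (hX : ‖algebraMap F[X] E X‖ = Fintype.card F) {u : E} {R : ℝ} (hu : ‖u‖ < R)
    (hw : ∀ c : Fin r → F, ‖∑ i, C (c i) • b i‖ < Fintype.card F * R) :
    Nat.card {l | l - u ∈ span F[X] (range b) ∧ ‖l‖ = Fintype.card F * R} =
      Fintype.card F ^ r * Nat.card {l | l - u ∈ span F[X] (range b) ∧ ‖l‖ = R} := by
  have hq : (1 : ℝ) ≤ Fintype.card F := by exact_mod_cast Fintype.card_pos
  have hu' : ‖-u‖ < Fintype.card F * R := by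
    rw [norm_neg]; exact hu.trans_le (le_mul_of_one_le_left ((norm_nonneg u).trans hu.le) hq)
  rw [natCard_coset_eq (span F[X] (range b)) u fun l => by
      rw [sub_eq_neg_add, norm_add_eq_iff_of_norm_lt hu'],
    natCard_coset_eq (span F[X] (range b)) u fun l => by
      rw [sub_eq_neg_add, norm_add_eq_iff_of_norm_lt (by rwa [norm_neg])]]
  refine natCard_span_eq_pow_mul hb fun c ν => ?_
  rw [norm_add_eq_iff_of_norm_lt (hw c), Algebra.smul_def, norm_mul, hX,
    mul_right_inj' (by linarith)]

end Lattice

section Counting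

variable {F : Type*} [Field F] {E : Type*} [NormedField E] [Algebra F[X] E]
  {q : ℕ} {Λ : Submodule F[X] E} {u : E}

lemma zCoef_eq_natCard (hq : 1 < q) (x : ℚ) :
    zCoef q Λ u x = Nat.card {l | l - u ∈ Λ ∧ ‖l‖ = (q : ℝ) ^ (x : ℝ)} := by
  have hq' : (1 : ℝ) < q := by exact_mod_cast hq
  unfold zCoef logq
  congr! 2 with l
  ext l
  constructor
  · rintro ⟨hl, hlu, hx⟩
    exact ⟨hlu, ((Real.logb_eq_iff_rpow_eq (by linarith) hq'.ne' (norm_pos_iff.mpr hl)).mp hx).symm⟩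
  · rintro ⟨hlu, hx⟩
    refine ⟨norm_pos_iff.mp (hx ▸ by positivity), hlu, ?_⟩
    rw [hx, Real.logb_rpow (by linarith) hq'.ne']

lemma finite_Iic_inter_support_zCoef (hq : 1 < q)
    (hfin : ∀ B, {l | l - u ∈ Λ ∧ ‖l‖ ≤ B}.Finite) (Y : ℚ) :
    (Iic Y ∩ support (zCoef q Λ u)).Finite := by
  have hq' : (1 : ℝ) < q := by exact_mod_cast hq
  refine ((hfin ((q : ℝ) ^ (Y : ℝ))).image (fun l => Real.logb q ‖l‖) |>.preimage
    Rat.cast_injective.injOn).subset ?_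
  rintro x ⟨hxY, hx⟩
  rw [mem_support, zCoef_eq_natCard hq, Nat.card_coe_set_eq] at hx
  obtain ⟨l, hlu, hl⟩ := nonempty_of_ncard_ne_zero hx
  refine ⟨l, ⟨hlu, hl ▸ (Real.rpow_le_rpow_left_iff hq').mpr (by exact_mod_cast hxY)⟩, ?_⟩
  simp only [hl, Real.logb_rpow (by linarith : (0 : ℝ) < q) hq'.ne']

lemma finsum_mem_Iic_zCoef_eq_natCard (hq : 1 < q)
    (hval : ∀ x : E, x ≠ 0 → ∃ s : ℚ, ‖x‖ = (q : ℝ) ^ (s : ℝ))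
    (hfin : ∀ B, {l | l - u ∈ Λ ∧ ‖l‖ ≤ B}.Finite) (Y : ℚ) :
    ∑ᶠ x ∈ Iic Y, zCoef q Λ u x =
      Nat.card {l | l - u ∈ Λ ∧ ‖l‖ ≤ (q : ℝ) ^ (Y : ℝ) ∧ l ≠ 0} := by
  have hq' : (1 : ℝ) < q := by exact_mod_cast hq
  set level : ℚ → Set E := fun x => {l | l - u ∈ Λ ∧ ‖l‖ = (q : ℝ) ^ (x : ℝ)}
  have hlevel_fin (x : ℚ) : (level x).Finite :=
    (hfin ((q : ℝ) ^ (x : ℝ))).subset fun l hl => ⟨hl.1, hl.2.le⟩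
  have hdisj : (Iic Y ∩ support (zCoef q Λ u)).PairwiseDisjoint level := by
    intro x _ y _ hxy
    refine disjoint_left.mpr fun l hx hy => hxy ?_
    exact_mod_cast (Real.rpow_right_inj (by linarith) hq'.ne').mp (hx.2.symm.trans hy.2)
  have hunion : ⋃ x ∈ Iic Y ∩ support (zCoef q Λ u), level x =
      {l | l - u ∈ Λ ∧ ‖l‖ ≤ (q : ℝ) ^ (Y : ℝ) ∧ l ≠ 0} := by
    ext l
    simp only [mem_iUnion, mem_inter_iff, mem_Iic, mem_support, exists_prop, mem_ofPred_eq]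
    constructor
    · rintro ⟨x, ⟨hxY, -⟩, hlu, hl⟩
      refine ⟨hlu, hl ▸ (Real.rpow_le_rpow_left_iff hq').mpr (by exact_mod_cast hxY),
        norm_pos_iff.mp (hl ▸ by positivity)⟩
    · rintro ⟨hlu, hlY, hl0⟩
      obtain ⟨x, hx⟩ := hval l hl0
      refine ⟨x, ⟨?_, ?_⟩, hlu, hx⟩
      · exact_mod_cast (Real.rpow_le_rpow_left_iff hq').mp (hx ▸ hlY)
      · rw [zCoef_eq_natCard hq, Nat.card_coe_set_eq]
        exact ((ncard_pos (hlevel_fin x)).mpr ⟨l, hlu, hx⟩).ne'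
  rw [← finsum_mem_inter_support, Nat.card_coe_set_eq, ← hunion,
    (finite_Iic_inter_support_zCoef hq hfin Y).ncard_biUnion (fun x _ => hlevel_fin x) hdisj]
  exact finsum_mem_congr rfl fun x _ => by rw [zCoef_eq_natCard hq, Nat.card_coe_set_eq]

lemma finsum_mem_Iic_zCoef_cast_eq (hq : 1 < q)
    (hval : ∀ x : E, x ≠ 0 → ∃ s : ℚ, ‖x‖ = (q : ℝ) ^ (s : ℝ))
    (hfin : ∀ B, {l | l - u ∈ Λ ∧ ‖l‖ ≤ B}.Finite) (Y : ℚ) :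
    ∑ᶠ x ∈ Iic Y, (zCoef q Λ u x : ℤ) =
      Nat.card {l | l - u ∈ Λ ∧ ‖l‖ ≤ (q : ℝ) ^ (Y : ℝ)} - if u ∈ Λ then 1 else 0 := by
  have hcast := (Nat.castAddMonoidHom ℤ).map_finsum_mem'
    (finite_Iic_inter_support_zCoef hq hfin Y)
  rw [Nat.coe_castAddMonoidHom, finsum_mem_Iic_zCoef_eq_natCard hq hval hfin] at hcast
  rw [← hcast, eq_sub_iff_add_eq]
  set ball := {l | l - u ∈ Λ ∧ ‖l‖ ≤ (q : ℝ) ^ (Y : ℝ)}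
  have hpunct : {l | l - u ∈ Λ ∧ ‖l‖ ≤ (q : ℝ) ^ (Y : ℝ) ∧ l ≠ 0} = ball \ {0} := by
    ext l; simp [ball, and_assoc]
  have h0 : (0 : E) ∈ ball ↔ u ∈ Λ := by simp [ball, Λ.neg_mem_iff, Real.rpow_nonneg]
  rw [hpunct, Nat.card_coe_set_eq, Nat.card_coe_set_eq]
  split_ifs with hu
  · exact_mod_cast ncard_sdiff_singleton_add_one (h0.mpr hu) (hfin _)
  · rw [sdiff_singleton_eq_self (mt h0.mp hu), add_zero]

lemma zCoef_eq_pow_mul_zCoef_sub_one [Fintype F] [IsUltrametricDist E] {r : ℕ} {b : Fin r → E}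
    (hb : LinearIndependent F[X] b) (hX : ‖algebraMap F[X] E X‖ = Fintype.card F) {x : ℚ}
    (hu : ‖u‖ < (Fintype.card F : ℝ) ^ ((x - 1 : ℚ) : ℝ))
    (hw : ∀ c : Fin r → F, ‖∑ i, C (c i) • b i‖ < (Fintype.card F : ℝ) ^ (x : ℝ)) :
    zCoef (Fintype.card F) (span F[X] (range b)) u x =
      Fintype.card F ^ r * zCoef (Fintype.card F) (span F[X] (range b)) u (x - 1) := by
  have hq : 1 < Fintype.card F := Fintype.one_lt_card
  have hx : (Fintype.card F : ℝ) ^ (x : ℝ) =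
      Fintype.card F * (Fintype.card F : ℝ) ^ ((x - 1 : ℚ) : ℝ) := by
    rw [Rat.cast_sub, Rat.cast_one, Real.rpow_sub_one (by positivity),
      mul_div_cancel₀ _ (by positivity)]
  rw [zCoef_eq_natCard hq, zCoef_eq_natCard hq, hx, natCard_coset_sphere_mul hb hX hu (hx ▸ hw)]

end Counting

theorem statement7_general
    (q : ℕ) (hq : Fintype.card Fq = q)
    (hna : ∀ x y : L, ‖x + y‖ ≤ max ‖x‖ ‖y‖)
    (hA : ∀ a : Polynomial Fq, a ≠ 0 →
      ‖algebraMap (Polynomial Fq) L a‖ = (q : ℝ) ^ a.natDegree)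
    (hval : ∀ x : L, x ≠ 0 → ∃ s : ℚ, ‖x‖ = (q : ℝ) ^ (s : ℝ))
    (r : ℕ)
    (Λ : Submodule (Polynomial Fq) L) (hΛ : IsLatticeOfRank r Λ)
    (u : L) :
    (∑ᶠ x : ℚ, ((zCoef q Λ u x : ℤ) - (q : ℤ) ^ r * zCoef q Λ u (x - 1))) =
      if u ∈ Λ then (q : ℤ) ^ r - 1 else 0 := by
  subst hq
  have : IsUltrametricDist L :=
    IsUltrametricDist.isUltrametricDist_of_forall_norm_add_le_max_norm hna
  obtain ⟨⟨b, hb, rfl⟩, hdisc⟩ := hΛ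
  have hq : 1 < Fintype.card Fq := Fintype.one_lt_card
  have hX : ‖algebraMap Fq[X] L X‖ = Fintype.card Fq := by simpa using hA X X_ne_zero
  have hfin := finite_coset_inter_closedBall hdisc u
  obtain ⟨M, hM⟩ := exists_rat_forall_lt_rpow
    (fun i : Option (Fin r → Fq) => i.elim ‖u‖ fun c => ‖∑ i, C (c i) • b i‖)
    (by exact_mod_cast hq : (1 : ℝ) < Fintype.card Fq)
  have hrec (x : ℚ) (hx : M + 1 < x) :
      (zCoef (Fintype.card Fq) (span Fq[X] (range b)) u x : ℤ) =
        Fintype.card Fq ^ r * zCoef (Fintype.card Fq) (span Fq[X] (range b)) u (x - 1) := by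
    exact_mod_cast zCoef_eq_pow_mul_zCoef_sub_one hb hX (hM (x - 1) (by linarith) none)
      fun c => hM x (by linarith) (some c)
  rw [finsum_sub_mul_shift (fun Y => support_comp_eq (Nat.cast : ℕ → ℤ) Nat.cast_eq_zero _ ▸
      finite_Iic_inter_support_zCoef hq hfin Y) hrec,
    finsum_mem_Iic_zCoef_cast_eq hq hval hfin, finsum_mem_Iic_zCoef_cast_eq hq hval hfin,
    add_sub_cancel_right]
  rw [Rat.cast_add, Rat.cast_one, Real.rpow_add_one (by positivity), mul_comm,
    natCard_coset_closedBall_mul hb hX (hM M le_rfl none).le fun c =>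
      (hM M le_rfl (some c)).le.trans
        (le_mul_of_one_le_left (by positivity) (by exact_mod_cast hq.le))]
  split_ifs <;> push_cast <;> ring

/-- The sum of the coefficients of `P_{u,Λ} = (1 - q^r S)·Z_{u,Λ}` equals
`q^r - 1` if `u ∈ Λ`, and `0` otherwise (i.e. `Z_{u,Λ}(1) = -1` resp. `0`). -/
theorem statement7
    (q : ℕ) (hq : Fintype.card Fq = q)
    (hna : ∀ x y : L, ‖x + y‖ ≤ max ‖x‖ ‖y‖)
    (hA : ∀ a : Polynomial Fq, a ≠ 0 →
      ‖algebraMap (Polynomial Fq) L a‖ = (q : ℝ) ^ a.natDegree)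
    (hval : ∀ x : L, x ≠ 0 → ∃ s : ℚ, ‖x‖ = (q : ℝ) ^ (s : ℝ))
    (r : ℕ)
    (Λ : Submodule (Polynomial Fq) L) (hΛ : IsLatticeOfRank r Λ)
    (u : L) (hu : InKSpan Λ u) :
    (∑ᶠ x : ℚ, ((zCoef q Λ u x : ℤ) - (q : ℤ) ^ r * zCoef q Λ u (x - 1))) =
      if u ∈ Λ then (q : ℤ) ^ r - 1 else 0 :=
  statement7_general q hq hna hA hval r Λ hΛ u
end
end

section
/- Let Λ be an A-lattice of rank r in L and u ∈ K·Λ. Then the difference Q := Z_{u,Λ} − Z_Λ has finite support, and there exists N₀ ∈ ℚ such that for every rational N ≥ N₀: ∑_{0≠λ∈u+Λ, log λ ≤ N} log λ − ∑_{0≠λ∈Λ, log λ ≤ N} log λ = ∑_{x∈ℚ} x·(coefficient of Q at S^x). (The right-hand side equals Z'_{u,Λ}(1) − Z'_Λ(1), the difference of the derivatives of these rational functions at S = 1.) -/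
open scoped Classical

noncomputable section

variable {Fq : Type*} [Field Fq] [Fintype Fq]
variable {L : Type*} [NormedField L] [CompleteSpace L]
variable [Algebra (Polynomial Fq) L]

/-- The set of nonzero `λ ∈ u + Λ` with `log λ ≤ N` (a finite set for a lattice `Λ`). -/
def ballSet (q : ℕ) (Λ : Submodule (Polynomial Fq) L) (u : L) (N : ℚ) : Set L :=
  {l : L | l ≠ 0 ∧ l - u ∈ Λ ∧ logq q l ≤ (N : ℝ)}

/-- Ultrametric: subtracting a smaller element does not change the norm. -/
lemma ultra_sub (hna : ∀ x y : L, ‖x + y‖ ≤ max ‖x‖ ‖y‖) {a u : L}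
    (h : ‖u‖ < ‖a‖) : ‖a - u‖ = ‖a‖ := by
  have h1 : ‖a - u‖ ≤ ‖a‖ := by
    have h2 := hna a (-u)
    rw [norm_neg] at h2
    simpa [sub_eq_add_neg] using h2.trans (max_le le_rfl h.le)
  refine le_antisymm h1 ?_
  by_contra hlt
  push_neg at hlt
  have h3 := hna (a - u) u
  rw [sub_add_cancel] at h3
  exact absurd h3 (not_le.2 (max_lt hlt h))

/-- Ultrametric: adding a smaller element does not change the norm. -/
lemma ultra_add (hna : ∀ x y : L, ‖x + y‖ ≤ max ‖x‖ ‖y‖) {a u : L}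
    (h : ‖u‖ < ‖a‖) : ‖a + u‖ = ‖a‖ := by
  have h' : ‖-u‖ < ‖a‖ := by rwa [norm_neg]
  simpa [sub_neg_eq_add] using ultra_sub hna h'

/-- `Q = Z_{u,Λ} - Z_Λ` has finite support and for all sufficiently large
rational `N`, `∑_{0≠λ∈u+Λ, log λ ≤ N} log λ - ∑_{0≠λ∈Λ, log λ ≤ N} log λ = ∑_x x·Q_x`
(i.e. `= Z'_{u,Λ}(1) - Z'_Λ(1)`). -/
theorem statement8
    (q : ℕ) (hq : Fintype.card Fq = q)
    (hna : ∀ x y : L, ‖x + y‖ ≤ max ‖x‖ ‖y‖)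
    (hA : ∀ a : Polynomial Fq, a ≠ 0 →
      ‖algebraMap (Polynomial Fq) L a‖ = (q : ℝ) ^ a.natDegree)
    (hval : ∀ x : L, x ≠ 0 → ∃ s : ℚ, ‖x‖ = (q : ℝ) ^ (s : ℝ))
    (r : ℕ)
    (Λ : Submodule (Polynomial Fq) L) (hΛ : IsLatticeOfRank r Λ)
    (u : L) (hu : InKSpan Λ u) :
    {x : ℚ | zCoef q Λ u x ≠ zCoef q Λ 0 x}.Finite ∧
    ∃ N₀ : ℚ, ∀ N : ℚ, N₀ ≤ N →
      ((∑ᶠ l ∈ ballSet q Λ u N, logq q l) - ∑ᶠ l ∈ ballSet q Λ 0 N, logq q l) =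
        ∑ᶠ x : ℚ, (x : ℝ) * ((zCoef q Λ u x : ℝ) - (zCoef q Λ 0 x : ℝ)) := by
  classical
  have hq2 : 1 < q := hq ▸ Fintype.one_lt_card
  have hq1 : (1 : ℝ) < (q : ℝ) := by exact_mod_cast hq2
  have hq0 : (0 : ℝ) < (q : ℝ) := by linarith
  have hqne : (q : ℝ) ≠ 1 := ne_of_gt hq1
  obtain ⟨s, hs⟩ : ∃ s : ℚ, ‖u‖ ≤ (q : ℝ) ^ (s : ℝ) := by
    by_cases h : u = 0
    · refine ⟨0, ?_⟩
      simp [h]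
    · obtain ⟨t, ht⟩ := hval u h
      exact ⟨t, ht.le⟩
  have hnormlog : ∀ l : L, l ≠ 0 → ‖l‖ = (q : ℝ) ^ (logq q l) := fun l hl =>
    (Real.rpow_logb hq0 hqne (norm_pos_iff.mpr hl)).symm
  -- every ball is finite
  have hfin : ∀ (v : L) (N : ℚ), (ballSet q Λ v N).Finite := by
    intro v N
    refine Set.Finite.subset ((hΛ.2 (max ((q:ℝ) ^ (N:ℝ)) ‖v‖)).image (· + v)) ?_
    rintro l ⟨hl0, hlΛ, hlog⟩
    refine ⟨l - v, ⟨hlΛ, ?_⟩, by simp⟩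
    have hl : ‖l‖ ≤ (q:ℝ) ^ (N:ℝ) := by
      rw [hnormlog l hl0]
      exact Real.rpow_le_rpow_of_exponent_le hq1.le hlog
    have h2 := hna l (-v)
    rw [norm_neg] at h2
    calc ‖l - v‖ ≤ max ‖l‖ ‖v‖ := by simpa [sub_eq_add_neg] using h2
    _ ≤ max ((q:ℝ)^(N:ℝ)) ‖v‖ := max_le_max hl le_rfl
  -- rational log values, chosen
  have hgex : ∀ l : L, ∃ t : ℚ, l ≠ 0 → logq q l = (t : ℝ) := by
    intro l
    by_cases hl : l = 0
    · exact ⟨0, fun h => absurd hl h⟩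
    · obtain ⟨t, ht⟩ := hval l hl
      exact ⟨t, fun _ => by rw [logq, ht, Real.logb_rpow hq0 hqne]⟩
  choose g hg using hgex
  -- large elements dominate u
  have hkey : ∀ l : L, l ≠ 0 → (s:ℝ) < logq q l → ‖u‖ < ‖l‖ := by
    intro l hl0 hgt
    calc ‖u‖ ≤ (q:ℝ) ^ (s:ℝ) := hs
    _ < (q:ℝ) ^ (logq q l) := (Real.rpow_lt_rpow_left_iff hq1).mpr hgt
    _ = ‖l‖ := (hnormlog l hl0).symm
  -- coefficients agree above s
  have hhigh : ∀ x : ℚ, s < x → zCoef q Λ u x = zCoef q Λ 0 x := by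
    intro x hx
    have hgt : ∀ l : L, logq q l = (x:ℝ) → (s:ℝ) < logq q l := by
      intro l hlx
      rw [hlx]
      exact_mod_cast hx
    unfold zCoef
    apply Nat.card_congr
    refine { toFun := fun p => ⟨p.1 - u, ?_⟩, invFun := fun p => ⟨p.1 + u, ?_⟩,
             left_inv := fun p => Subtype.ext (sub_add_cancel _ _),
             right_inv := fun p => Subtype.ext (add_sub_cancel_right _ _) }
    · obtain ⟨hl0, hlΛ, hlx⟩ := p.2
      have hn : ‖p.1 - u‖ = ‖p.1‖ := ultra_sub hna (hkey _ hl0 (hgt _ hlx))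
      exact ⟨by rw [← norm_ne_zero_iff, hn, norm_ne_zero_iff]; exact hl0,
             by rw [sub_zero]; exact hlΛ,
             by simp only [logq, hn]; exact hlx⟩
    · obtain ⟨hm0, hmΛ, hmx⟩ := p.2
      rw [sub_zero] at hmΛ
      have hn : ‖p.1 + u‖ = ‖p.1‖ := ultra_add hna (hkey _ hm0 (hgt _ hmx))
      exact ⟨by rw [← norm_ne_zero_iff, hn, norm_ne_zero_iff]; exact hm0,
             by rw [add_sub_cancel_right]; exact hmΛ,
             by simp only [logq, hn]; exact hmx⟩
  -- witnesses for nonzero coefficients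
  have hwit : ∀ (v : L) (x : ℚ), zCoef q Λ v x ≠ 0 →
      ∃ l : L, l ≠ 0 ∧ l - v ∈ Λ ∧ logq q l = (x:ℝ) := by
    intro v x hx
    unfold zCoef at hx
    obtain ⟨⟨l, hl⟩⟩ := (Nat.card_ne_zero.mp hx).1
    exact ⟨l, hl⟩
  have hwit2 : ∀ (v : L) (x : ℚ), x ≤ s → zCoef q Λ v x ≠ 0 →
      ∃ l ∈ ballSet q Λ v s, g l = x := by
    intro v x hxs h
    obtain ⟨l, hl0, hlΛ, hlx⟩ := hwit v x h
    refine ⟨l, ⟨hl0, hlΛ, by rw [hlx]; exact_mod_cast hxs⟩, ?_⟩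
    have h2 := hg l hl0
    rw [hlx] at h2
    exact_mod_cast h2.symm
  set Bf := (hfin u s).toFinset with hBf
  set Cf := (hfin 0 s).toFinset with hCf
  set Tf : Finset ℚ := Bf.image g ∪ Cf.image g with hTf
  have hmem : ∀ x : ℚ, zCoef q Λ u x ≠ zCoef q Λ 0 x → x ∈ Tf := by
    intro x hne
    rcases le_or_gt x s with hxs | hxs
    · by_cases h : zCoef q Λ u x = 0
      · obtain ⟨l, hl, hgl⟩ := hwit2 0 x hxs (fun h0 => hne (h.trans h0.symm))
        exact Finset.mem_union_right _
          (Finset.mem_image.mpr ⟨l, (hfin 0 s).mem_toFinset.mpr hl, hgl⟩)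
      · obtain ⟨l, hl, hgl⟩ := hwit2 u x hxs h
        exact Finset.mem_union_left _
          (Finset.mem_image.mpr ⟨l, (hfin u s).mem_toFinset.mpr hl, hgl⟩)
    · exact absurd (hhigh x hxs) hne
  have hTle : ∀ x ∈ Tf, x ≤ s := by
    intro x hx
    rcases Finset.mem_union.mp hx with h | h <;>
    · obtain ⟨m, hm, rfl⟩ := Finset.mem_image.mp h
      rw [Set.Finite.mem_toFinset] at hm
      obtain ⟨hm0, -, hmlog⟩ := hm
      rw [hg m hm0] at hmlog
      exact_mod_cast hmlog
  -- counting fibers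
  have hcount : ∀ (v : L) (x : ℚ), x ≤ s →
      zCoef q Λ v x = ((hfin v s).toFinset.filter (fun l => g l = x)).card := by
    intro v x hxs
    have hset : {l : L | l ≠ 0 ∧ l - v ∈ Λ ∧ logq q l = (x:ℝ)}
        = ↑((hfin v s).toFinset.filter (fun l => g l = x)) := by
      ext l
      simp only [Set.mem_setOf_eq, Finset.coe_filter, Set.Finite.mem_toFinset]
      constructor
      · rintro ⟨hl0, hlΛ, hlx⟩
        refine ⟨⟨hl0, hlΛ, by rw [hlx]; exact_mod_cast hxs⟩, ?_⟩
        have h2 := hg l hl0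
        rw [hlx] at h2
        exact_mod_cast h2.symm
      · rintro ⟨⟨hl0, hlΛ, -⟩, hgl⟩
        exact ⟨hl0, hlΛ, by rw [hg l hl0, hgl]⟩
    rw [zCoef, hset, Nat.card_coe_set_eq, Set.ncard_coe_finset]
  -- grouped sums
  have hsum : ∀ v : L, (∀ l ∈ (hfin v s).toFinset, g l ∈ Tf) →
      ∑ x ∈ Tf, (x:ℝ) * (zCoef q Λ v x : ℝ) = ∑ l ∈ (hfin v s).toFinset, logq q l := by
    intro v hmap
    rw [← Finset.sum_fiberwise_of_maps_to hmap (fun l => logq q l)]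
    refine Finset.sum_congr rfl fun x hxT => ?_
    have hxs : x ≤ s := hTle x hxT
    have hterm : ∀ l ∈ (hfin v s).toFinset.filter (fun l => g l = x),
        logq q l = (x:ℝ) := by
      intro l hl
      rw [Finset.mem_filter, Set.Finite.mem_toFinset] at hl
      obtain ⟨hlB, hgl⟩ := hl
      rw [hg l hlB.1, hgl]
    rw [Finset.sum_congr rfl hterm, Finset.sum_const, nsmul_eq_mul,
      hcount v x hxs, mul_comm]
  refine ⟨Set.Finite.subset Tf.finite_toSet hmem, s, fun N hN => ?_⟩
  -- RHS
  have hsupp : Function.support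
      (fun x : ℚ => (x:ℝ) * ((zCoef q Λ u x : ℝ) - (zCoef q Λ 0 x : ℝ))) ⊆ ↑Tf := by
    intro x hx
    simp only [Function.mem_support] at hx
    have hne : zCoef q Λ u x ≠ zCoef q Λ 0 x :=
      fun h => hx (by rw [h, sub_self, mul_zero])
    exact Finset.mem_coe.mpr (hmem x hne)
  have hmapu : ∀ l ∈ (hfin u s).toFinset, g l ∈ Tf :=
    fun l hl => Finset.mem_union_left _ (Finset.mem_image_of_mem g hl)
  have hmap0 : ∀ l ∈ (hfin 0 s).toFinset, g l ∈ Tf :=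
    fun l hl => Finset.mem_union_right _ (Finset.mem_image_of_mem g hl)
  have hRHS : (∑ᶠ x : ℚ, (x:ℝ) * ((zCoef q Λ u x : ℝ) - (zCoef q Λ 0 x : ℝ)))
      = (∑ l ∈ (hfin u s).toFinset, logq q l) - ∑ l ∈ (hfin 0 s).toFinset, logq q l := by
    rw [finsum_eq_finset_sum_of_support_subset _ hsupp, ← hsum u hmapu, ← hsum 0 hmap0,
      ← Finset.sum_sub_distrib]
    exact Finset.sum_congr rfl fun x _ => by ring
  -- LHS decomposition
  have hLHS : ∀ v : L, (∑ᶠ l ∈ ballSet q Λ v N, logq q l)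
      = (∑ l ∈ (hfin v s).toFinset, logq q l)
        + ∑ᶠ l ∈ (ballSet q Λ v N \ ballSet q Λ v s), logq q l := by
    intro v
    have hsub : ballSet q Λ v s ⊆ ballSet q Λ v N := by
      rintro l ⟨h0, hΛ', hlog⟩
      exact ⟨h0, hΛ', hlog.trans (by exact_mod_cast hN)⟩
    have hdisj : Disjoint (ballSet q Λ v s) (ballSet q Λ v N \ ballSet q Λ v s) :=
      Set.disjoint_left.mpr fun a has hadiff => hadiff.2 has
    calc (∑ᶠ l ∈ ballSet q Λ v N, logq q l)
        = ∑ᶠ l ∈ ballSet q Λ v s ∪ (ballSet q Λ v N \ ballSet q Λ v s), logq q l := by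
          rw [Set.union_diff_cancel hsub]
      _ = (∑ᶠ l ∈ ballSet q Λ v s, logq q l)
            + ∑ᶠ l ∈ (ballSet q Λ v N \ ballSet q Λ v s), logq q l :=
          finsum_mem_union hdisj (hfin v s) ((hfin v N).subset Set.diff_subset)
      _ = _ := by rw [finsum_mem_eq_finite_toFinset_sum (logq q) (hfin v s)]
  -- the two tails agree
  have hdiff : (∑ᶠ l ∈ (ballSet q Λ u N \ ballSet q Λ u s), logq q l)
      = ∑ᶠ l ∈ (ballSet q Λ 0 N \ ballSet q Λ 0 s), logq q l := by
    refine finsum_mem_eq_of_bijOn (· - u) ⟨?_, ?_, ?_⟩ ?_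
    · rintro l ⟨⟨hl0, hlΛ, hlN⟩, hnot⟩
      have hgt : (s:ℝ) < logq q l := lt_of_not_ge fun h => hnot ⟨hl0, hlΛ, h⟩
      have hn : ‖l - u‖ = ‖l‖ := ultra_sub hna (hkey l hl0 hgt)
      have hlog' : logq q (l - u) = logq q l := by simp only [logq, hn]
      have h0' : l - u ≠ 0 := by rw [← norm_ne_zero_iff, hn, norm_ne_zero_iff]; exact hl0
      refine ⟨⟨h0', by rw [sub_zero]; exact hlΛ, by rw [hlog']; exact hlN⟩, ?_⟩
      rintro ⟨-, -, hle⟩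
      rw [hlog'] at hle
      exact absurd hle (not_le.mpr hgt)
    · intro a _ b _ h
      exact sub_left_inj.mp h
    · rintro m ⟨⟨hm0, hmΛ, hmN⟩, hnot⟩
      rw [sub_zero] at hmΛ
      have hgt : (s:ℝ) < logq q m :=
        lt_of_not_ge fun h => hnot ⟨hm0, by rw [sub_zero]; exact hmΛ, h⟩
      have hn : ‖m + u‖ = ‖m‖ := ultra_add hna (hkey m hm0 hgt)
      have hlog' : logq q (m + u) = logq q m := by simp only [logq, hn]
      have h0' : m + u ≠ 0 := by rw [← norm_ne_zero_iff, hn, norm_ne_zero_iff]; exact hm0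
      refine ⟨m + u, ⟨⟨h0', by rw [add_sub_cancel_right]; exact hmΛ,
        by rw [hlog']; exact hmN⟩, ?_⟩, by simp⟩
      rintro ⟨-, -, hle⟩
      rw [hlog'] at hle
      exact absurd hle (not_le.mpr hgt)
    · rintro l ⟨⟨hl0, hlΛ, -⟩, hnot⟩
      have hgt : (s:ℝ) < logq q l := lt_of_not_ge fun h => hnot ⟨hl0, hlΛ, h⟩
      have hn : ‖l - u‖ = ‖l‖ := ultra_sub hna (hkey l hl0 hgt)
      simp only [logq, hn]
  rw [hRHS, hLHS u, hLHS 0, hdiff]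
  ring
end
end

section
/- Let Λ be an A-lattice of rank r in L. Then the subgroup of L^× generated by the set {sgn(λ) : 0 ≠ λ ∈ Λ} is finite. -/
open scoped Classical

noncomputable section

variable {Fq : Type*} [Field Fq] [Fintype Fq]
variable {L : Type*} [NormedField L] [CompleteSpace L]
variable [Algebra (Polynomial Fq) L]

/-- The rational number `s` with `|z| = q^s` (whenever it exists; `0` otherwise). -/
def rlog (q : ℕ) (z : L) : ℚ :=
  if h : ∃ s : ℚ, ‖z‖ = (q : ℝ) ^ (s : ℝ) then h.choose else 0

/-- The `1`-unit part `⟨z⟩ = z·ρ(log z)·sgn(z)⁻¹` of `z ∈ L^×`, relative to a compatible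
system `ρ` of rational powers of the uniformizer `π = T⁻¹` and a sign function `sgn`. -/
def uPart (q : ℕ) (ρ : ℚ → L) (sgn : L → L) (z : L) : L :=
  z * ρ (rlog q z) * (sgn z)⁻¹

/-! ### Auxiliary lemmas -/

section Aux

variable {L' : Type*} [NormedField L']

lemma aux_na_sub (hna : ∀ x y : L', ‖x + y‖ ≤ max ‖x‖ ‖y‖) (x y : L') :
    ‖x - y‖ ≤ max ‖x‖ ‖y‖ := by
  simpa [sub_eq_add_neg] using hna x (-y)

lemma aux_norm_one (hna : ∀ x y : L', ‖x + y‖ ≤ max ‖x‖ ‖y‖) {x : L'}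
    (h : ‖x - 1‖ < 1) : ‖x‖ = 1 := by
  have h1 : ‖x‖ ≤ 1 := by
    calc ‖x‖ = ‖(x - 1) + 1‖ := by ring_nf
    _ ≤ max ‖x - 1‖ ‖(1 : L')‖ := hna _ _
    _ ≤ 1 := by rw [norm_one]; exact max_le h.le le_rfl
  rcases lt_or_eq_of_le h1 with hlt | heq
  · exfalso
    have h2 : (1 : ℝ) ≤ max ‖x‖ ‖x - 1‖ := by
      calc (1 : ℝ) = ‖(1 : L')‖ := norm_one.symm
      _ = ‖x - (x - 1)‖ := by ring_nf
      _ ≤ max ‖x‖ ‖x - 1‖ := aux_na_sub hna _ _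
    have := lt_of_le_of_lt h2 (max_lt hlt h)
    exact lt_irrefl _ this
  · exact heq

lemma aux_norm_eq (hna : ∀ x y : L', ‖x + y‖ ≤ max ‖x‖ ‖y‖) {x y : L'}
    (h : ‖x - y‖ < ‖y‖) : ‖x‖ = ‖y‖ := by
  have h1 : ‖x‖ ≤ ‖y‖ := by
    calc ‖x‖ = ‖(x - y) + y‖ := by ring_nf
    _ ≤ max ‖x - y‖ ‖y‖ := hna _ _
    _ ≤ ‖y‖ := max_le h.le le_rfl
  refine le_antisymm h1 ?_
  by_contra hcon
  push_neg at hcon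
  have h2 : ‖y‖ ≤ max ‖x‖ ‖x - y‖ := by
    calc ‖y‖ = ‖x - (x - y)‖ := by ring_nf
    _ ≤ max ‖x‖ ‖x - y‖ := aux_na_sub hna _ _
  exact lt_irrefl _ (lt_of_le_of_lt h2 (max_lt hcon h))

lemma aux_norm_sum (hna : ∀ x y : L', ‖x + y‖ ≤ max ‖x‖ ‖y‖) {ι : Type*} {c : ℝ}
    (hc : 0 ≤ c) :
    ∀ (s : Finset ι) (f : ι → L'), (∀ i ∈ s, ‖f i‖ ≤ c) → ‖∑ i ∈ s, f i‖ ≤ c := by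
  intro s
  induction s using Finset.cons_induction with
  | empty => intro f _; simpa using hc
  | cons a s ha ih =>
      intro f h
      rw [Finset.sum_cons]
      exact le_trans (hna _ _)
        (max_le (h a (Finset.mem_cons_self a s)) (ih f fun i hi => h i (Finset.mem_cons_of_mem hi)))

/-- In a nonarchimedean normed field of characteristic `p`, a root of unity at distance
less than `1` from `1` equals `1`. -/
lemma aux_ru (p : ℕ) [hp : Fact p.Prime] [CharP L' p]
    (hna : ∀ x y : L', ‖x + y‖ ≤ max ‖x‖ ‖y‖)
    {ζ : L'} {k : ℕ} (hk : 0 < k) (hζk : ζ ^ k = 1) (hcl : ‖ζ - 1‖ < 1) : ζ = 1 := by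
  set a := k.factorization p with ha
  set m := k / p ^ a with hm
  have hk0 : k ≠ 0 := hk.ne'
  have hkm : p ^ a * m = k := Nat.ordProj_mul_ordCompl_eq_self k p
  have hpm : ¬ p ∣ m := Nat.not_dvd_ordCompl hp.out hk0
  have hpa0 : p ^ a ≠ 0 := pow_ne_zero _ hp.out.pos.ne'
  set η := ζ ^ (p ^ a) with hη
  have hηm : η ^ m = 1 := by rw [hη, ← pow_mul, hkm, hζk]
  have hηsub : η - 1 = (ζ - 1) ^ (p ^ a) := by
    rw [hη, sub_pow_char_pow, one_pow]
  have hηcl : ‖η - 1‖ < 1 := by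
    rw [hηsub, norm_pow]
    exact pow_lt_one₀ (norm_nonneg _) hcl hpa0
  have hηnorm : ‖η‖ = 1 := aux_norm_one hna hηcl
  have hη1 : η = 1 := by
    by_contra hne
    have hsum : (∑ i ∈ Finset.range m, η ^ i) = 0 := by
      have hgs := geom_sum_mul η m
      rw [hηm, sub_self] at hgs
      rcases mul_eq_zero.mp hgs with h | h
      · exact h
      · exact absurd (sub_eq_zero.mp h) hne
    have hterm : ∀ i ∈ Finset.range m, ‖η ^ i - 1‖ ≤ ‖η - 1‖ := by
      intro i _
      have hgs := geom_sum_mul η i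
      calc ‖η ^ i - 1‖ = ‖(∑ j ∈ Finset.range i, η ^ j) * (η - 1)‖ := by rw [hgs]
        _ = ‖∑ j ∈ Finset.range i, η ^ j‖ * ‖η - 1‖ := norm_mul _ _
        _ ≤ 1 * ‖η - 1‖ := by
            refine mul_le_mul_of_nonneg_right ?_ (norm_nonneg _)
            exact aux_norm_sum hna zero_le_one _ _
              (fun j _ => by rw [norm_pow, hηnorm, one_pow])
        _ = ‖η - 1‖ := one_mul _
    have hmain : ‖(∑ i ∈ Finset.range m, η ^ i) - (m : L')‖ ≤ ‖η - 1‖ := by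
      have hrw : (∑ i ∈ Finset.range m, η ^ i) - (m : L')
          = ∑ i ∈ Finset.range m, (η ^ i - 1) := by
        rw [Finset.sum_sub_distrib, Finset.sum_const, Finset.card_range, nsmul_eq_mul, mul_one]
      rw [hrw]
      exact aux_norm_sum hna (norm_nonneg _) _ _ hterm
    -- `‖(m : L')‖ = 1` since `p ∤ m`
    have hmz : (m : ZMod p) ≠ 0 := by
      rw [Ne, ZMod.natCast_eq_zero_iff]
      exact hpm
    have hmpow : ((m : L')) ^ (p - 1) = 1 := by
      have hpow := ZMod.pow_card_sub_one_eq_one hmz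
      have := congrArg (ZMod.castHom (dvd_refl p) L') hpow
      rw [map_pow, map_natCast, map_one] at this
      exact this
    have hp1 : p - 1 ≠ 0 := by have := hp.out.two_le; omega
    have hmnorm : ‖(m : L')‖ = 1 := by
      have h0 : ‖(m : L')‖ ^ (p - 1) = 1 := by rw [← norm_pow, hmpow, norm_one]
      rcases lt_trichotomy ‖(m : L')‖ 1 with h | h | h
      · exfalso
        have := pow_lt_one₀ (norm_nonneg _) h hp1
        rw [h0] at this; exact lt_irrefl _ this
      · exact h
      · exfalso
        have := one_lt_pow₀ h hp1
        rw [h0] at this; exact lt_irrefl _ this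
    rw [hsum, zero_sub, norm_neg, hmnorm] at hmain
    exact lt_irrefl _ (lt_of_le_of_lt hmain hηcl)
  have hz : (ζ - 1) ^ (p ^ a) = 0 := by rw [← hηsub, hη1, sub_self]
  have := (pow_eq_zero_iff hpa0).mp hz
  exact sub_eq_zero.mp this

/-- Core comparison lemma: if `u·a = v·b` with `u, v` one-units and `a, b` roots of
unity, then `a = b`. -/
lemma aux_core (p : ℕ) [Fact p.Prime] [CharP L' p]
    (hna : ∀ x y : L', ‖x + y‖ ≤ max ‖x‖ ‖y‖) {u v a b : L'}
    (hu : ‖u - 1‖ < 1) (hv : ‖v - 1‖ < 1)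
    (ha : ∃ k : ℕ, 0 < k ∧ a ^ k = 1) (hb : ∃ k : ℕ, 0 < k ∧ b ^ k = 1)
    (heq : u * a = v * b) : a = b := by
  obtain ⟨ka, hka, haa⟩ := ha
  obtain ⟨kb, hkb, hbb⟩ := hb
  have ha0 : a ≠ 0 := by
    rintro rfl; rw [zero_pow hka.ne'] at haa; exact zero_ne_one haa
  have hb0 : b ≠ 0 := by
    rintro rfl; rw [zero_pow hkb.ne'] at hbb; exact zero_ne_one hbb
  have hu1 : ‖u‖ = 1 := aux_norm_one hna hu
  have hv1 : ‖v‖ = 1 := aux_norm_one hna hv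
  have hu0 : u ≠ 0 := by intro h; rw [h, norm_zero] at hu1; exact one_ne_zero hu1.symm
  have hv0 : v ≠ 0 := by intro h; rw [h, norm_zero] at hv1; exact one_ne_zero hv1.symm
  set ζ := a * b⁻¹ with hζ
  have hζk : ζ ^ (ka * kb) = 1 := by
    have h1 : a ^ (ka * kb) = 1 := by rw [pow_mul, haa, one_pow]
    have h2 : b ^ (ka * kb) = 1 := by rw [mul_comm, pow_mul, hbb, one_pow]
    rw [hζ, mul_pow, h1, inv_pow, h2, inv_one, one_mul]
  have hζeq : ζ = v * u⁻¹ := by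
    rw [hζ]
    field_simp
    linear_combination heq
  have hζcl : ‖ζ - 1‖ < 1 := by
    have hrw : ζ - 1 = (v - u) * u⁻¹ := by
      rw [hζeq]; field_simp
    rw [hrw, norm_mul, norm_inv, hu1, inv_one, mul_one]
    have hvu : v - u = (v - 1) - (u - 1) := by ring
    rw [hvu]
    exact lt_of_le_of_lt (aux_na_sub hna _ _) (max_lt hv hu)
  have hζ1 : ζ = 1 := aux_ru p hna (Nat.mul_pos hka hkb) hζk hζcl
  rw [hζ] at hζ1
  exact (mul_inv_eq_one₀ hb0).mp hζ1

/-- The submonoid generated by a finite set of torsion elements of a commutative monoid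
is finite. -/
lemma aux_closure_finite {M : Type*} [CommMonoid M] {S : Set M} (hS : S.Finite)
    (h : ∀ x ∈ S, ∃ k : ℕ, 0 < k ∧ x ^ k = 1) :
    (Submonoid.closure S : Set M).Finite := by
  classical
  set F := hS.toFinset with hF
  have hmemF : ∀ x, x ∈ F ↔ x ∈ S := fun x => hS.mem_toFinset
  set k : M → ℕ := fun x => if h' : ∃ k : ℕ, 0 < k ∧ x ^ k = 1 then h'.choose else 1 with hk
  have hkpos : ∀ x ∈ S, 0 < k x := by
    intro x hx; rw [hk]; simp only; rw [dif_pos (h x hx)]; exact (h x hx).choose_spec.1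
  have hkx : ∀ x ∈ S, x ^ (k x) = 1 := by
    intro x hx; rw [hk]; simp only; rw [dif_pos (h x hx)]; exact (h x hx).choose_spec.2
  set N : ℕ := ∏ x ∈ F, k x with hN
  have hN0 : 0 < N := Finset.prod_pos (fun x hx => hkpos x ((hmemF x).mp hx))
  have hxN : ∀ x ∈ S, x ^ N = 1 := by
    intro x hx
    obtain ⟨c, hc⟩ := Finset.dvd_prod_of_mem k ((hmemF x).mpr hx)
    rw [hN, hc, pow_mul, hkx x hx, one_pow]
  have key : ∀ z ∈ Submonoid.closure S,
      ∃ e : {y // y ∈ F} → ℕ, z = ∏ y ∈ F.attach, (y : M) ^ (e y) := by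
    intro z hz
    induction hz using Submonoid.closure_induction with
    | mem x hx =>
        have hxF : x ∈ F := (hmemF x).mpr hx
        refine ⟨fun y => if y = ⟨x, hxF⟩ then 1 else 0, ?_⟩
        have hcongr : ∀ y ∈ F.attach,
            (y : M) ^ (if y = (⟨x, hxF⟩ : {y // y ∈ F}) then 1 else 0)
              = (if y = (⟨x, hxF⟩ : {y // y ∈ F}) then (y : M) else 1) := by
          intro y _; split <;> simp
        rw [Finset.prod_congr rfl hcongr,
          Finset.prod_ite_eq' F.attach (⟨x, hxF⟩ : {y // y ∈ F}) (fun y => (y : M))]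
        simp
    | one => exact ⟨fun _ => 0, by simp⟩
    | mul a b ha hb iha ihb =>
        obtain ⟨e1, he1⟩ := iha
        obtain ⟨e2, he2⟩ := ihb
        refine ⟨e1 + e2, ?_⟩
        rw [he1, he2, ← Finset.prod_mul_distrib]
        exact Finset.prod_congr rfl (fun y _ => (pow_add _ _ _).symm)
  have hsub : (Submonoid.closure S : Set M) ⊆
      Set.range (fun e : {y // y ∈ F} → Fin N => ∏ y ∈ F.attach, (y : M) ^ ((e y : ℕ))) := by
    intro z hz
    obtain ⟨e, he⟩ := key z hz
    refine ⟨fun y => ⟨e y % N, Nat.mod_lt _ hN0⟩, ?_⟩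
    simp only
    rw [he]
    exact Finset.prod_congr rfl (fun y _ =>
      (pow_eq_pow_mod (e y) (hxN (y : M) ((hmemF _).mp y.2))).symm)
  exact (Set.finite_range _).subset hsub

/-- `rlog` is correct whenever a rational valuation exists. -/
lemma rlog_spec {L' : Type*} [NormedField L'] {q : ℕ} {z : L'}
    (h : ∃ s : ℚ, ‖z‖ = (q : ℝ) ^ (s : ℝ)) :
    ‖z‖ = (q : ℝ) ^ ((rlog q z : ℚ) : ℝ) := by
  rw [rlog, dif_pos h]
  exact h.choose_spec

lemma rlog_unique {L' : Type*} [NormedField L'] {q : ℕ} (hq : (1 : ℝ) < q) {z : L'} {s : ℚ}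
    (hs : ‖z‖ = (q : ℝ) ^ (s : ℝ)) : rlog q z = s := by
  have h1 := rlog_spec (q := q) (z := z) ⟨s, hs⟩
  have h2 : ((rlog q z : ℚ) : ℝ) = (s : ℝ) := by
    by_contra hne
    rcases lt_or_gt_of_ne hne with hlt | hlt
    · have := (Real.rpow_lt_rpow_left_iff hq).mpr hlt
      rw [← h1, ← hs] at this
      exact lt_irrefl _ this
    · have := (Real.rpow_lt_rpow_left_iff hq).mpr hlt
      rw [← h1, ← hs] at this
      exact lt_irrefl _ this
  exact_mod_cast h2

end Aux

/-- The subgroup of `L^×` generated by `{sgn λ : 0 ≠ λ ∈ Λ}` is finite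
(since every `sgn λ` is a root of unity, the submonoid generated by these elements is
already a group). -/
theorem statement12
    (q : ℕ) (hq : Fintype.card Fq = q)
    (hna : ∀ x y : L, ‖x + y‖ ≤ max ‖x‖ ‖y‖)
    (hA : ∀ a : Polynomial Fq, a ≠ 0 →
      ‖algebraMap (Polynomial Fq) L a‖ = (q : ℝ) ^ a.natDegree)
    (hval : ∀ x : L, x ≠ 0 → ∃ s : ℚ, ‖x‖ = (q : ℝ) ^ (s : ℝ))
    (ρ : ℚ → L) (sgn : L → L)
    (hρ : ∀ x y : ℚ, ρ (x + y) = ρ x * ρ y)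
    (hρ1 : ρ 1 * algebraMap (Polynomial Fq) L Polynomial.X = 1)
    (hsgn : ∀ z : L, z ≠ 0 →
      (∃ k : ℕ, 0 < k ∧ sgn z ^ k = 1) ∧ ‖uPart q ρ sgn z - 1‖ < 1)
    (r : ℕ)
    (Λ : Submodule (Polynomial Fq) L) (hΛ : IsLatticeOfRank r Λ) :
    (Submonoid.closure (sgn '' {l : L | l ∈ Λ ∧ l ≠ 0}) : Set L).Finite := by
  classical
  -- basic facts about `q`
  have hq2 : 1 < q := by
    rw [← hq]; exact Fintype.one_lt_card
  have hqR : (1 : ℝ) < (q : ℕ) := by exact_mod_cast hq2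
  have hq0R : (0 : ℝ) < (q : ℕ) := lt_trans zero_lt_one hqR
  -- `L` has characteristic `p`
  have hinj : Function.Injective (algebraMap (Polynomial Fq) L) := by
    intro x y hxy
    by_contra hne
    have hsub : x - y ≠ 0 := sub_ne_zero.mpr hne
    have hval' := hA (x - y) hsub
    rw [map_sub, hxy, sub_self, norm_zero] at hval'
    have := pow_pos hq0R (x - y).natDegree
    linarith
  set f : Fq →+* L := (algebraMap (Polynomial Fq) L).comp Polynomial.C with hf
  have hfinj : Function.Injective f := hinj.comp Polynomial.C_injective
  set p := ringChar Fq with hpdef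
  haveI hcFq : CharP Fq p := ringChar.charP Fq
  haveI hpp : Fact p.Prime := ⟨CharP.char_is_prime Fq p⟩
  haveI hcL : CharP L p := charP_of_injective_ringHom hfinj p
  -- basic nonvanishing facts
  have hup : ∀ z : L, z ≠ 0 → uPart q ρ sgn z ≠ 0 := by
    intro z hz h0
    have h1 := (hsgn z hz).2
    rw [h0, zero_sub, norm_neg, norm_one] at h1
    exact lt_irrefl _ h1
  have hsgnne : ∀ z : L, z ≠ 0 → sgn z ≠ 0 := by
    intro z hz h0
    exact hup z hz (by rw [uPart, h0, inv_zero, mul_zero])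
  have hupeq : ∀ z : L, z ≠ 0 → uPart q ρ sgn z * sgn z = z * ρ (rlog q z) := by
    intro z hz
    rw [uPart, mul_assoc, inv_mul_cancel₀ (hsgnne z hz), mul_one]
  -- `sgn` is locally constant
  have hclose : ∀ z w : L, z ≠ 0 → w ≠ 0 → ‖z - w‖ < ‖w‖ → sgn z = sgn w := by
    intro z w hz hw hlt
    have hw0 : (0 : ℝ) < ‖w‖ := norm_pos_iff.mpr hw
    have hnorm : ‖z‖ = ‖w‖ := aux_norm_eq hna hlt
    obtain ⟨s, hs⟩ := hval w hw
    have hsz : rlog q z = s := rlog_unique hqR (hnorm.trans hs)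
    have hsw : rlog q w = s := rlog_unique hqR hs
    have hu : ‖uPart q ρ sgn z - 1‖ < 1 := (hsgn z hz).2
    have hv : ‖uPart q ρ sgn w - 1‖ < 1 := (hsgn w hw).2
    have hueq : uPart q ρ sgn z * sgn z = z * ρ s := by rw [hupeq z hz, hsz]
    have hveq : uPart q ρ sgn w * sgn w = w * ρ s := by rw [hupeq w hw, hsw]
    set v := uPart q ρ sgn w with hvdef
    set u' := z * w⁻¹ * v with hu'def
    have hu'cl : ‖u' - 1‖ < 1 := by
      have hrew : u' - 1 = (z * (v - 1) + (z - w)) * w⁻¹ := by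
        rw [hu'def]; field_simp; ring
      rw [hrew, norm_mul, norm_inv, ← div_eq_mul_inv, div_lt_one hw0]
      refine lt_of_le_of_lt (hna _ _) (max_lt ?_ hlt)
      rw [norm_mul, hnorm]
      exact mul_lt_of_lt_one_right hw0 hv
    have hu'eq : u' * sgn w = z * ρ s := by
      calc u' * sgn w = z * w⁻¹ * (v * sgn w) := by rw [hu'def]; ring
      _ = z * w⁻¹ * (w * ρ s) := by rw [hveq]
      _ = z * ρ s := by field_simp
    exact aux_core p hna hu hu'cl (hsgn z hz).1 (hsgn w hw).1 (hueq.trans hu'eq.symm)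
  -- `sgn (T·μ) = sgn μ`
  set t : L := algebraMap (Polynomial Fq) L Polynomial.X with htdef
  have ht : ‖t‖ = (q : ℝ) := by
    have := hA Polynomial.X Polynomial.X_ne_zero
    rwa [Polynomial.natDegree_X, pow_one] at this
  have ht0 : t ≠ 0 := by
    intro h; rw [h, norm_zero] at ht; linarith
  have hTmul : ∀ μ : L, μ ≠ 0 → sgn (t * μ) = sgn μ := by
    intro μ hμ
    have htμ : t * μ ≠ 0 := mul_ne_zero ht0 hμ
    obtain ⟨s, hs⟩ := hval μ hμ
    have hsμ : rlog q μ = s := rlog_unique hqR hs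
    have hstμ : rlog q (t * μ) = s + 1 := by
      apply rlog_unique hqR
      rw [norm_mul, ht, hs,
        show (((s + 1 : ℚ)) : ℝ) = (s : ℝ) + 1 by push_cast; ring,
        Real.rpow_add hq0R, Real.rpow_one]
      ring
    have hu := (hsgn (t * μ) htμ).2
    have hv := (hsgn μ hμ).2
    have h1 : uPart q ρ sgn (t * μ) * sgn (t * μ) = μ * ρ s := by
      rw [hupeq _ htμ, hstμ, hρ s 1]
      calc t * μ * (ρ s * ρ 1) = μ * ρ s * (ρ 1 * t) := by ring
      _ = μ * ρ s := by rw [hρ1, mul_one]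
    have h2 : uPart q ρ sgn μ * sgn μ = μ * ρ s := by rw [hupeq _ hμ, hsμ]
    exact aux_core p hna hu hv (hsgn _ htμ).1 (hsgn _ hμ).1 (h1.trans h2.symm)
  -- setup for the descent
  obtain ⟨⟨b, _hli, hbspan⟩, hdisc⟩ := hΛ
  set B0 : ℝ := 1 + ∑ i, ‖b i‖ with hB0def
  have hsumnn : 0 ≤ ∑ i, ‖b i‖ := Finset.sum_nonneg (fun i _ => norm_nonneg _)
  have hB0_1 : 1 ≤ B0 := by rw [hB0def]; linarith
  have hB0_0 : 0 ≤ B0 := le_trans zero_le_one hB0_1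
  have hbB : ∀ i, ‖b i‖ ≤ B0 := by
    intro i
    have h1 : ‖b i‖ ≤ ∑ j, ‖b j‖ :=
      Finset.single_le_sum (f := fun j => ‖b j‖) (fun j _ => norm_nonneg _) (Finset.mem_univ i)
    rw [hB0def]; linarith
  -- decomposition `λ = T·μ + (bounded)`
  have hdecomp : ∀ lam ∈ Λ, ∃ μ ∈ Λ, ‖lam - t * μ‖ ≤ B0 := by
    intro lam hlam
    rw [← hbspan] at hlam
    obtain ⟨c, hc⟩ := (Submodule.mem_span_range_iff_exists_fun (Polynomial Fq)).mp hlam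
    refine ⟨∑ i, (c i).divX • b i, ?_, ?_⟩
    · rw [← hbspan]
      exact Submodule.sum_mem _ (fun i _ =>
        Submodule.smul_mem _ _ (Submodule.subset_span ⟨i, rfl⟩))
    · have key : lam - t * (∑ i, (c i).divX • b i)
          = ∑ i, (Polynomial.C ((c i).coeff 0)) • b i := by
        rw [← hc, Finset.mul_sum, ← Finset.sum_sub_distrib]
        refine Finset.sum_congr rfl (fun i _ => ?_)
        have hpoly : c i - Polynomial.X * (c i).divX = Polynomial.C ((c i).coeff 0) := by
          linear_combination -(Polynomial.X_mul_divX_add (c i))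
        calc (c i) • b i - t * ((c i).divX • b i)
            = (algebraMap (Polynomial Fq) L (c i - Polynomial.X * (c i).divX)) * b i := by
              rw [Algebra.smul_def, Algebra.smul_def, map_sub, map_mul, htdef]; ring
          _ = (Polynomial.C ((c i).coeff 0)) • b i := by rw [hpoly, ← Algebra.smul_def]
      rw [key]
      refine aux_norm_sum hna hB0_0 _ _ (fun i _ => ?_)
      by_cases h0 : (c i).coeff 0 = 0
      · simp only [h0, map_zero, zero_smul, norm_zero]
        exact hB0_0
      · have hC0 : Polynomial.C ((c i).coeff 0) ≠ 0 := by simpa using h0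
        have hnC := hA _ hC0
        rw [Polynomial.natDegree_C, pow_zero] at hnC
        rw [Algebra.smul_def, norm_mul, hnC, one_mul]
        exact hbB i
  -- main descent
  have hmain : ∀ n : ℕ, ∀ lam : L, lam ∈ Λ → lam ≠ 0 → ‖lam‖ ≤ B0 * (q : ℝ) ^ n →
      sgn lam ∈ sgn '' {x : L | x ∈ Λ ∧ x ≠ 0 ∧ ‖x‖ ≤ B0} := by
    intro n
    induction n with
    | zero =>
        intro lam h1 h2 h3
        exact ⟨lam, ⟨h1, h2, by simpa using h3⟩, rfl⟩
    | succ n ih =>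
        intro lam h1 h2 h3
        by_cases hle : ‖lam‖ ≤ B0
        · exact ⟨lam, ⟨h1, h2, hle⟩, rfl⟩
        · push_neg at hle
          obtain ⟨μ, hμΛ, hμc⟩ := hdecomp lam h1
          have hlt : ‖lam - t * μ‖ < ‖lam‖ := lt_of_le_of_lt hμc hle
          have htμn : ‖t * μ‖ = ‖lam‖ :=
            aux_norm_eq hna (by rwa [norm_sub_rev] at hlt)
          have htμ0 : t * μ ≠ 0 := by
            intro h0
            rw [h0, norm_zero] at htμn
            linarith
          have hμ0 : μ ≠ 0 := right_ne_zero_of_mul htμ0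
          have h4 : sgn lam = sgn μ := by
            rw [hclose lam (t * μ) h2 htμ0 (by rwa [htμn]), hTmul μ hμ0]
          have h5 : ‖μ‖ ≤ B0 * (q : ℝ) ^ n := by
            have h6 : (q : ℝ) * ‖μ‖ ≤ (q : ℝ) * (B0 * (q : ℝ) ^ n) := by
              have h7 : ‖t * μ‖ = (q : ℝ) * ‖μ‖ := by rw [norm_mul, ht]
              have h8 : B0 * (q : ℝ) ^ (n + 1) = (q : ℝ) * (B0 * (q : ℝ) ^ n) := by
                rw [pow_succ]; ring
              rw [← h7, htμn, ← h8]
              exact h3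
            exact le_of_mul_le_mul_left h6 hq0R
          rw [h4]
          exact ih μ hμΛ hμ0 h5
  -- the set of sign values is finite
  have hSfin : ({x : L | x ∈ Λ ∧ x ≠ 0 ∧ ‖x‖ ≤ B0}).Finite :=
    (hdisc B0).subset (fun x hx => ⟨hx.1, hx.2.2⟩)
  have hS : (sgn '' {l : L | l ∈ Λ ∧ l ≠ 0}) ⊆ sgn '' {x : L | x ∈ Λ ∧ x ≠ 0 ∧ ‖x‖ ≤ B0} := by
    rintro _ ⟨lam, ⟨h1, h2⟩, rfl⟩
    obtain ⟨n, hn⟩ := pow_unbounded_of_one_lt ‖lam‖ hqR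
    refine hmain n lam h1 h2 (le_trans hn.le ?_)
    exact le_mul_of_one_le_left (pow_nonneg (le_of_lt hq0R) n) hB0_1
  have hSfinite : (sgn '' {l : L | l ∈ Λ ∧ l ≠ 0}).Finite :=
    (hSfin.image sgn).subset hS
  -- conclude via torsion
  have htors : ∀ x ∈ sgn '' {l : L | l ∈ Λ ∧ l ≠ 0}, ∃ k : ℕ, 0 < k ∧ x ^ k = 1 := by
    rintro _ ⟨lam, ⟨_, h2⟩, rfl⟩
    exact (hsgn lam h2).1
  exact aux_closure_finite hSfinite htors
end
end

section
/- Let r = 2 and let ω ∈ L satisfy |ω| = inf_{x∈K_∞} |ω − x| and |ω| = q^ℓ with ℓ a nonnegative integer; put Λ := A·ω + A, an A-lattice of rank 2 in L. Let n ∈ A be nonconstant and let a₁, a₂ ∈ A with deg a₁ < deg n, deg a₂ < deg n and (a₁, a₂) ≠ (0, 0); put u := (a₁ω + a₂)/n, which lies in K·Λ ∖ Λ. Then log u = max(ℓ + deg a₁, deg a₂) − deg n (with the convention deg 0 = −∞), e^Λ(u) ≠ 0, and: log e^Λ(u) = (q/(q−1))·(q^{log u} − 1) if log u ≥ 0, while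 log e^Λ(u) = log u if log u < 0. -/
open scoped Classical
set_option linter.unusedSectionVars false

noncomputable section

variable {Fq : Type*} [Field Fq] [Fintype Fq]
variable {L : Type*} [NormedField L] [CompleteSpace L]
variable [Algebra (Polynomial Fq) L]

/-- `K_∞ ⊆ L`: the closure in `L` of the subfield `𝔽_q(T)` generated by the image of
`A = 𝔽_q[T]`; since `|·|` restricts to the `∞`-adic absolute value on `𝔽_q(T)`, this is a
copy of the completion `K_∞ = 𝔽_q((T⁻¹))`. -/
def Kinfty : Set L :=
  closure ((Subfield.closure (Set.range (algebraMap (Polynomial Fq) L)) : Subfield L) : Set L)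

lemma s19_add_right (hna : ∀ x y : L, ‖x + y‖ ≤ max ‖x‖ ‖y‖) {x y : L}
    (h : ‖x‖ < ‖y‖) : ‖x + y‖ = ‖y‖ := by
  refine le_antisymm ((hna x y).trans (by simp [le_of_lt h])) ?_
  by_contra hc
  push_neg at hc
  have h2 : ‖y‖ ≤ max ‖x + y‖ ‖x‖ := by
    have := hna (x + y) (-x)
    simpa using this
  rcases max_cases ‖x + y‖ ‖x‖ with ⟨he, _⟩ | ⟨he, _⟩ <;> rw [he] at h2 <;> linarith

lemma s19_lemA {q : ℕ} (hq1 : (1:ℝ) < q)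
    (hna : ∀ x y : L, ‖x + y‖ ≤ max ‖x‖ ‖y‖)
    (hA : ∀ a : Polynomial Fq, a ≠ 0 →
      ‖algebraMap (Polynomial Fq) L a‖ = (q : ℝ) ^ a.natDegree)
    {ω : L}
    (hinf : ∀ x ∈ Kinfty (Fq := Fq) (L := L), ‖ω‖ ≤ ‖ω - x‖)
    (p r : Polynomial Fq) :
    ‖algebraMap (Polynomial Fq) L p * ω + algebraMap (Polynomial Fq) L r‖
      = max (‖algebraMap (Polynomial Fq) L p‖ * ‖ω‖) ‖algebraMap (Polynomial Fq) L r‖ := by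
  set φ := algebraMap (Polynomial Fq) L
  rcases eq_or_ne p 0 with rfl | hp
  · simp
  have hφp : φ p ≠ 0 := by
    intro h
    have := hA p hp
    rw [h] at this
    simp at this
    nlinarith [pow_pos (by linarith : (0:ℝ) < q) p.natDegree]
  rcases le_or_gt ‖φ r‖ (‖φ p‖ * ‖ω‖) with hle | hlt
  · rw [max_eq_left hle]
    refine le_antisymm ((hna _ _).trans (by rw [norm_mul]; exact max_le le_rfl hle)) ?_
    have hx : -(φ r / φ p) ∈ Kinfty (Fq := Fq) (L := L) := by
      apply subset_closure
      exact Subfield.neg_mem _ (Subfield.div_mem _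
        (Subfield.subset_closure ⟨r, rfl⟩) (Subfield.subset_closure ⟨p, rfl⟩))
    have h1 : ‖ω‖ ≤ ‖ω + φ r / φ p‖ := by simpa [sub_neg_eq_add] using hinf _ hx
    have h2 : φ p * (ω + φ r / φ p) = φ p * ω + φ r := by field_simp
    calc ‖φ p‖ * ‖ω‖ ≤ ‖φ p‖ * ‖ω + φ r / φ p‖ := by
            exact mul_le_mul_of_nonneg_left h1 (norm_nonneg _)
      _ = ‖φ p * ω + φ r‖ := by rw [← norm_mul, h2]
  · rw [max_eq_right hlt.le, s19_add_right hna (by rwa [norm_mul])]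

lemma s19_phi_ne {q : ℕ} (hq1 : (1:ℝ) < q)
    (hA : ∀ a : Polynomial Fq, a ≠ 0 →
      ‖algebraMap (Polynomial Fq) L a‖ = (q : ℝ) ^ a.natDegree)
    {p : Polynomial Fq} (hp : p ≠ 0) : algebraMap (Polynomial Fq) L p ≠ 0 := by
  intro h
  have := hA p hp
  rw [h] at this
  simp at this
  nlinarith [pow_pos (by linarith : (0:ℝ) < q) p.natDegree]

lemma s19_mem_span {ω : L} (x : L) :
    x ∈ Submodule.span (Polynomial Fq) {ω, (1 : L)} ↔
      ∃ b c : Polynomial Fq, x = algebraMap (Polynomial Fq) L b * ω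
        + algebraMap (Polynomial Fq) L c := by
  rw [Submodule.mem_span_pair]
  constructor
  · rintro ⟨a, b, rfl⟩
    exact ⟨a, b, by simp [Algebra.smul_def]⟩
  · rintro ⟨b, c, rfl⟩
    exact ⟨b, c, by simp [Algebra.smul_def]⟩

def s19_degLT (F : Type*) [Field F] [Fintype F] (j : ℕ) : Finset (Polynomial F) :=
  (Finset.univ : Finset (Fin j → F)).image
    (fun v => ((Polynomial.degreeLTEquiv F j).symm v : Polynomial F))

lemma s19_mem_degLT {j : ℕ} {c : Polynomial Fq} :
    c ∈ s19_degLT Fq j ↔ c.degree < (j : ℕ) := by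
  constructor
  · rintro h
    simp only [s19_degLT, Finset.mem_image] at h
    obtain ⟨v, -, rfl⟩ := h
    have := ((Polynomial.degreeLTEquiv Fq j).symm v).2
    rwa [Polynomial.mem_degreeLT] at this
  · intro h
    have hc : c ∈ Polynomial.degreeLT Fq j := Polynomial.mem_degreeLT.mpr h
    simp only [s19_degLT, Finset.mem_image]
    exact ⟨Polynomial.degreeLTEquiv Fq j ⟨c, hc⟩, Finset.mem_univ _, by simp⟩

lemma s19_card_degLT {q : ℕ} (hq : Fintype.card Fq = q) (j : ℕ) :
    (s19_degLT Fq j).card = q ^ j := by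
  have hinj : Function.Injective
      (fun v : Fin j → Fq => ((Polynomial.degreeLTEquiv Fq j).symm v : Polynomial Fq)) :=
    fun a b h => (Polynomial.degreeLTEquiv Fq j).symm.injective (Subtype.val_injective h)
  rw [s19_degLT, Finset.card_image_of_injective _ hinj]
  simp [Fintype.card_fun, hq]

lemma s19_card_degLT_erase {q : ℕ} (hq : Fintype.card Fq = q) (j : ℕ) :
    ((s19_degLT Fq j).erase 0).card = q ^ j - 1 := by
  rw [Finset.card_erase_of_mem, s19_card_degLT hq]
  exact s19_mem_degLT.mpr (by simp only [Polynomial.degree_zero]; exact WithBot.bot_lt_coe (j:ℕ))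

lemma s19_filter_count {q : ℕ} (hq : Fintype.card Fq = q) {M j : ℕ} (hj : j < M) :
    (((s19_degLT Fq M).erase 0).filter (fun c => c.natDegree ≤ j)).card = q ^ (j+1) - 1 := by
  have : ((s19_degLT Fq M).erase 0).filter (fun c => c.natDegree ≤ j)
      = (s19_degLT Fq (j+1)).erase 0 := by
    ext c
    simp only [Finset.mem_filter, Finset.mem_erase, s19_mem_degLT]
    constructor
    · rintro ⟨⟨hc0, -⟩, hcj⟩
      refine ⟨hc0, ?_⟩
      rw [Polynomial.degree_eq_natDegree hc0]
      exact_mod_cast Nat.lt_succ_of_le hcj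
    · rintro ⟨hc0, hcj⟩
      rw [Polynomial.degree_eq_natDegree hc0] at hcj
      have hcj' : c.natDegree < j + 1 := by exact_mod_cast hcj
      refine ⟨⟨hc0, ?_⟩, Nat.lt_succ_iff.mp hcj'⟩
      rw [Polynomial.degree_eq_natDegree hc0]
      exact_mod_cast lt_of_lt_of_le hcj' hj
  rw [this, s19_card_degLT_erase hq]

lemma s19_sumT {q : ℕ} (hq : Fintype.card Fq = q) (M : ℕ) :
    ∑ c ∈ (s19_degLT Fq M).erase 0, (M - c.natDegree)
      = ∑ j ∈ Finset.range M, (q ^ (j+1) - 1) := by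
  have key : ∀ c ∈ (s19_degLT Fq M).erase 0,
      M - c.natDegree = ((Finset.range M).filter (fun j => c.natDegree ≤ j)).card := by
    intro c hc
    rw [Finset.mem_erase, s19_mem_degLT] at hc
    have hdc : c.natDegree < M := by
      rw [Polynomial.degree_eq_natDegree hc.1] at hc
      exact_mod_cast hc.2
    have : (Finset.range M).filter (fun j => c.natDegree ≤ j) = Finset.Ico c.natDegree M := by
      ext j
      simp only [Finset.mem_filter, Finset.mem_range, Finset.mem_Ico]
      omega
    rw [this, Nat.card_Ico]
  rw [Finset.sum_congr rfl key]
  simp only [Finset.card_filter]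
  rw [Finset.sum_comm]
  refine Finset.sum_congr rfl fun j hj => ?_
  rw [Finset.mem_range] at hj
  rw [← Finset.card_filter, s19_filter_count hq hj]

lemma s19_real_ident {x : ℝ} (hx : 1 < x) (M : ℕ) :
    (M : ℝ) + ∑ j ∈ Finset.range M, (x ^ (j+1) - 1) = x / (x - 1) * (x ^ M - 1) := by
  have hx1 : x ≠ 1 := ne_of_gt hx
  have h1 : ∑ j ∈ Finset.range M, (x ^ (j+1) - 1)
      = x * ((x ^ M - 1) / (x - 1)) - M := by
    rw [Finset.sum_sub_distrib, ← geom_sum_eq hx1, Finset.mul_sum]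
    simp [pow_succ, mul_comm]
  rw [h1]
  ring


lemma s19_prod_sub_one (hna : ∀ x y : L, ‖x + y‖ ≤ max ‖x‖ ‖y‖)
    {ι : Type*} (t : Finset ι) (f : ι → L) {δ : ℝ} (hδ0 : 0 ≤ δ) (hδ1 : δ ≤ 1)
    (h : ∀ i ∈ t, ‖f i - 1‖ ≤ δ) : ‖∏ i ∈ t, f i - 1‖ ≤ δ := by
  classical
  induction t using Finset.induction_on with
  | empty => simpa using hδ0
  | @insert j s hj ih =>
    rw [Finset.prod_insert hj]
    have hP : ‖∏ i ∈ s, f i - 1‖ ≤ δ := ih fun i hi => h i (Finset.mem_insert_of_mem hi)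
    have hPn : ‖∏ i ∈ s, f i‖ ≤ 1 := by
      have := hna (∏ i ∈ s, f i - 1) 1
      simp only [sub_add_cancel] at this
      exact this.trans (by simp [max_le_iff, hP.trans hδ1])
    have key : f j * ∏ i ∈ s, f i - 1
        = (f j - 1) * ∏ i ∈ s, f i + (∏ i ∈ s, f i - 1) := by ring
    rw [key]
    refine (hna _ _).trans (max_le ?_ hP)
    rw [norm_mul]
    calc ‖f j - 1‖ * ‖∏ i ∈ s, f i‖ ≤ δ * 1 :=
          mul_le_mul (h j (Finset.mem_insert_self _ _)) hPn (norm_nonneg _) hδ0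
      _ = δ := mul_one δ

lemma s19_multipliable (hna : ∀ x y : L, ‖x + y‖ ≤ max ‖x‖ ‖y‖)
    {ι : Type*} (f : ι → L)
    (hf : ∀ ε : ℝ, 0 < ε → {i : ι | ε ≤ ‖f i - 1‖}.Finite) : Multipliable f := by
  classical
  set N₀ : Finset ι := (hf 1 one_pos).toFinset with hN₀
  set C : ℝ := ∏ i ∈ N₀, max ‖f i‖ 1 with hC
  have hC1 : (1:ℝ) ≤ C := by
    calc (1:ℝ) = ∏ _i ∈ N₀, (1:ℝ) := by simp
      _ ≤ C := Finset.prod_le_prod (by intros; norm_num) (fun i _ => le_max_right _ _)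
  have hbound : ∀ t : Finset ι, ‖∏ i ∈ t, f i‖ ≤ C := by
    intro t
    have h1 : ‖∏ i ∈ t, f i‖ ≤ ∏ i ∈ t, max ‖f i‖ 1 := by
      rw [norm_prod]
      exact Finset.prod_le_prod (fun i _ => norm_nonneg _) fun i _ => le_max_left _ _
    have h2 : ∏ i ∈ t, max ‖f i‖ 1 ≤ ∏ i ∈ t ∪ N₀, max ‖f i‖ 1 := by
      rw [← Finset.prod_sdiff (Finset.subset_union_left (s₂ := N₀))]
      refine le_mul_of_one_le_left ?_ ?_
      · exact Finset.prod_nonneg fun i _ => le_trans zero_le_one (le_max_right _ _)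
      · calc (1:ℝ) = ∏ _i ∈ (t ∪ N₀) \ t, (1:ℝ) := by simp
          _ ≤ _ := Finset.prod_le_prod (by intros; norm_num) (fun i _ => le_max_right _ _)
    have h3 : ∏ i ∈ t ∪ N₀, max ‖f i‖ 1 = C := by
      rw [hC]
      refine (Finset.prod_subset Finset.subset_union_right ?_).symm
      intro i _ hi
      rw [hN₀, Set.Finite.mem_toFinset] at hi
      simp only [Set.mem_setOf_eq, not_le] at hi
      have : ‖f i‖ ≤ 1 := by
        have := hna (f i - 1) 1
        simp only [sub_add_cancel] at this
        exact this.trans (by simp [max_le_iff, hi.le])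
      simp [max_eq_right this]
    linarith
  have hcauchy : CauchySeq (fun s : Finset ι => ∏ i ∈ s, f i) := by
    rw [Metric.cauchySeq_iff']
    intro ε hε
    have hδpos : 0 < min 1 (ε / (2 * C)) := by positivity
    set δ := min 1 (ε / (2 * C)) with hδ
    refine ⟨N₀ ∪ (hf δ hδpos).toFinset, fun n hn => ?_⟩
    set N := N₀ ∪ (hf δ hδpos).toFinset
    rw [dist_eq_norm]
    have hsub : N ⊆ n := hn
    have hsplit : ∏ i ∈ n, f i = (∏ i ∈ n \ N, f i) * ∏ i ∈ N, f i :=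
      (Finset.prod_sdiff hsub).symm
    have : ∏ i ∈ n, f i - ∏ i ∈ N, f i = (∏ i ∈ n \ N, f i - 1) * ∏ i ∈ N, f i := by
      rw [hsplit]; ring
    rw [this, norm_mul]
    have h1 : ‖∏ i ∈ n \ N, f i - 1‖ ≤ δ := by
      refine s19_prod_sub_one hna _ _ hδpos.le (min_le_left _ _) fun i hi => ?_
      rw [Finset.mem_sdiff] at hi
      have : i ∉ (hf δ hδpos).toFinset := fun h => hi.2 (Finset.mem_union_right _ h)
      rw [Set.Finite.mem_toFinset] at this
      simp only [Set.mem_setOf_eq, not_le] at this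
      exact this.le
    calc ‖∏ i ∈ n \ N, f i - 1‖ * ‖∏ i ∈ N, f i‖ ≤ δ * C :=
          mul_le_mul h1 (hbound N) (norm_nonneg _) hδpos.le
      _ ≤ (ε / (2 * C)) * C := by
          exact mul_le_mul_of_nonneg_right (min_le_right _ _) (by linarith)
      _ < ε := by rw [div_mul_eq_mul_div]; rw [div_lt_iff₀ (by linarith)]; nlinarith
  obtain ⟨a, ha⟩ := cauchySeq_tendsto_of_complete hcauchy
  exact ⟨a, ha⟩


def s19_normHom (K : Type*) [NormedField K] : K →* ℝ where
  toFun := norm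
  map_one' := norm_one
  map_mul' := norm_mul

set_option maxHeartbeats 1000000 in
/-- Sizes of division points in rank `2`: with `ω` in the fundamental
domain, `|ω| = q^ℓ`, `Λ = A·ω + A` and `u = (a₁ω + a₂)/n` (`deg aᵢ < deg n`, `(a₁,a₂) ≠ 0`),
one has `u ∈ K·Λ ∖ Λ`, `log u = max(ℓ + deg a₁, deg a₂) - deg n` (with `deg 0 = -∞`),
`e^Λ(u) ≠ 0`, and `log e^Λ(u) = (q/(q-1))(q^{log u} - 1)` if `log u ≥ 0`, while
`log e^Λ(u) = log u` if `log u < 0`. -/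
theorem statement19
    (q : ℕ) (hq : Fintype.card Fq = q)
    (hna : ∀ x y : L, ‖x + y‖ ≤ max ‖x‖ ‖y‖)
    (hA : ∀ a : Polynomial Fq, a ≠ 0 →
      ‖algebraMap (Polynomial Fq) L a‖ = (q : ℝ) ^ a.natDegree)
    (hval : ∀ x : L, x ≠ 0 → ∃ s : ℚ, ‖x‖ = (q : ℝ) ^ (s : ℝ))
    (ω : L) (ℓ : ℕ)
    (hωi : ‖ω‖ = sInf {y : ℝ | ∃ x ∈ Kinfty (Fq := Fq) (L := L), y = ‖ω - x‖})
    (hωl : ‖ω‖ = (q : ℝ) ^ ℓ)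
    (n a₁ a₂ : Polynomial Fq) (hn : 0 < n.natDegree)
    (ha₁ : a₁.degree < n.degree) (ha₂ : a₂.degree < n.degree)
    (ha : ¬(a₁ = 0 ∧ a₂ = 0)) :
    InKSpan (Submodule.span (Polynomial Fq) {ω, (1 : L)})
      ((algebraMap (Polynomial Fq) L a₁ * ω + algebraMap (Polynomial Fq) L a₂) /
        algebraMap (Polynomial Fq) L n) ∧
    ((algebraMap (Polynomial Fq) L a₁ * ω + algebraMap (Polynomial Fq) L a₂) /
        algebraMap (Polynomial Fq) L n) ∉
      Submodule.span (Polynomial Fq) {ω, (1 : L)} ∧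
    (∃ m : ℤ,
      max (((ℓ : ℤ) : WithBot ℤ) + a₁.degree.map (fun k : ℕ => (k : ℤ)))
          (a₂.degree.map (fun k : ℕ => (k : ℤ))) = (m : WithBot ℤ) ∧
      logq q ((algebraMap (Polynomial Fq) L a₁ * ω + algebraMap (Polynomial Fq) L a₂) /
          algebraMap (Polynomial Fq) L n) = (m : ℝ) - (n.natDegree : ℝ)) ∧
    latExp (Submodule.span (Polynomial Fq) {ω, (1 : L)})
      ((algebraMap (Polynomial Fq) L a₁ * ω + algebraMap (Polynomial Fq) L a₂) /
        algebraMap (Polynomial Fq) L n) ≠ 0 ∧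
    (0 ≤ logq q ((algebraMap (Polynomial Fq) L a₁ * ω + algebraMap (Polynomial Fq) L a₂) /
          algebraMap (Polynomial Fq) L n) →
      logq q (latExp (Submodule.span (Polynomial Fq) {ω, (1 : L)})
          ((algebraMap (Polynomial Fq) L a₁ * ω + algebraMap (Polynomial Fq) L a₂) /
            algebraMap (Polynomial Fq) L n)) =
        ((q : ℝ) / ((q : ℝ) - 1)) *
          ((q : ℝ) ^ (logq q ((algebraMap (Polynomial Fq) L a₁ * ω +
              algebraMap (Polynomial Fq) L a₂) / algebraMap (Polynomial Fq) L n)) - 1)) ∧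
    (logq q ((algebraMap (Polynomial Fq) L a₁ * ω + algebraMap (Polynomial Fq) L a₂) /
          algebraMap (Polynomial Fq) L n) < 0 →
      logq q (latExp (Submodule.span (Polynomial Fq) {ω, (1 : L)})
          ((algebraMap (Polynomial Fq) L a₁ * ω + algebraMap (Polynomial Fq) L a₂) /
            algebraMap (Polynomial Fq) L n)) =
        logq q ((algebraMap (Polynomial Fq) L a₁ * ω + algebraMap (Polynomial Fq) L a₂) /
          algebraMap (Polynomial Fq) L n)) := by
  classical
  have hq2 : 1 < q := hq ▸ Fintype.one_lt_card
  have hq1 : (1:ℝ) < q := by exact_mod_cast hq2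
  have hq0 : (0:ℝ) < q := lt_trans one_pos hq1
  have hqne : (q:ℝ) ≠ 1 := ne_of_gt hq1
  set φ := algebraMap (Polynomial Fq) L with hφdef
  have hω0 : 0 < ‖ω‖ := by rw [hωl]; positivity
  have hω1 : 1 ≤ ‖ω‖ := by rw [hωl]; exact one_le_pow₀ hq1.le
  have hinf : ∀ x ∈ Kinfty (Fq := Fq) (L := L), ‖ω‖ ≤ ‖ω - x‖ := by
    intro x hx
    rw [hωi]
    exact csInf_le ⟨0, by rintro y ⟨z, hz, rfl⟩; exact norm_nonneg _⟩ ⟨x, hx, rfl⟩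
  have lemA : ∀ p r : Polynomial Fq, ‖φ p * ω + φ r‖ = max (‖φ p‖ * ‖ω‖) ‖φ r‖ :=
    fun p r => s19_lemA hq1 hna hA hinf p r
  have hzero : ∀ p r : Polynomial Fq, φ p * ω + φ r = 0 → p = 0 ∧ r = 0 := by
    intro p r h
    have h2 := lemA p r
    rw [h, norm_zero] at h2
    have hp := le_max_left (‖φ p‖ * ‖ω‖) ‖φ r‖
    have hr := le_max_right (‖φ p‖ * ‖ω‖) ‖φ r‖
    rw [← h2] at hp hr
    constructor
    · by_contra hp0
      have h3 : 0 < ‖φ p‖ * ‖ω‖ :=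
        mul_pos (norm_pos_iff.mpr (s19_phi_ne hq1 hA hp0)) hω0
      linarith
    · by_contra hr0
      have h3 : 0 < ‖φ r‖ := norm_pos_iff.mpr (s19_phi_ne hq1 hA hr0)
      linarith
  have hn0 : n ≠ 0 := fun h => by simp [h] at hn
  have hφn : φ n ≠ 0 := s19_phi_ne hq1 hA hn0
  set D := n.natDegree with hD
  have hφnn : ‖φ n‖ = (q:ℝ) ^ D := hA n hn0
  set u := (φ a₁ * ω + φ a₂) / φ n with hu
  set Λ := Submodule.span (Polynomial Fq) {ω, (1:L)} with hΛ
  set k := if a₁ = 0 then a₂.natDegree else max (ℓ + a₁.natDegree) a₂.natDegree with hk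
  have hdeg : ∀ a : Polynomial Fq, a.degree < n.degree → a ≠ 0 → a.natDegree < D := by
    intro a h hne
    rw [Polynomial.degree_eq_natDegree hne, Polynomial.degree_eq_natDegree hn0] at h
    exact_mod_cast h
  have hnum : ‖φ a₁ * ω + φ a₂‖ = (q:ℝ) ^ k := by
    rw [lemA a₁ a₂]
    by_cases h1 : a₁ = 0
    · have h2 : a₂ ≠ 0 := fun h2 => ha ⟨h1, h2⟩
      rw [h1, map_zero, norm_zero, zero_mul, hA a₂ h2, hk, if_pos h1]
      exact max_eq_right (by positivity)
    · rw [hA a₁ h1, hk, if_neg h1]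
      by_cases h2 : a₂ = 0
      · rw [h2, map_zero, norm_zero, max_eq_left (by positivity), hωl, ← pow_add,
          Polynomial.natDegree_zero]
        congr 1
        omega
      · rw [hA a₂ h2, hωl, ← pow_add]
        rcases le_total (a₁.natDegree + ℓ) a₂.natDegree with hle | hle
        · rw [max_eq_right (pow_le_pow_right₀ hq1.le hle),
            max_eq_right (by omega : ℓ + a₁.natDegree ≤ a₂.natDegree)]
        · rw [max_eq_left (pow_le_pow_right₀ hq1.le hle),
            max_eq_left (by omega : a₂.natDegree ≤ ℓ + a₁.natDegree)]
          congr 1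
          omega
  have hknorm : ‖u‖ = (q:ℝ)^k / (q:ℝ)^D := by rw [hu, norm_div, hnum, hφnn]
  have hupos : 0 < ‖u‖ := by rw [hknorm]; positivity
  have hlogu : logq q u = (k:ℝ) - (D:ℝ) := by
    rw [logq, hknorm, ← Real.rpow_natCast (q:ℝ) k, ← Real.rpow_natCast (q:ℝ) D,
      ← Real.rpow_sub hq0, Real.logb_rpow hq0 hqne]
  have hnotin : u ∉ Λ := by
    intro hmem
    obtain ⟨b, c, hbc⟩ := (s19_mem_span u).mp hmem
    have hzero' : φ (a₁ - b*n) * ω + φ (a₂ - c*n) = 0 := by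
      rw [map_sub, map_sub, map_mul, map_mul]
      have huu : u * φ n = φ a₁ * ω + φ a₂ := by rw [hu]; field_simp
      rw [hbc] at huu
      linear_combination -huu
    obtain ⟨h1, h2⟩ := hzero _ _ hzero'
    have h1' : a₁ = b * n := sub_eq_zero.mp h1
    have h2' : a₂ = c * n := sub_eq_zero.mp h2
    have hb : b = 0 := by
      by_contra hb0
      have hbn : b * n ≠ 0 := mul_ne_zero hb0 hn0
      have h5 : a₁.natDegree < D := hdeg a₁ ha₁ (h1' ▸ hbn)
      rw [h1', Polynomial.natDegree_mul hb0 hn0] at h5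
      omega
    have hc : c = 0 := by
      by_contra hc0
      have hcn : c * n ≠ 0 := mul_ne_zero hc0 hn0
      have h5 : a₂.natDegree < D := hdeg a₂ ha₂ (h2' ▸ hcn)
      rw [h2', Polynomial.natDegree_mul hc0 hn0] at h5
      omega
    exact ha ⟨by rw [h1', hb, zero_mul], by rw [h2', hc, zero_mul]⟩
  have hpart1 : InKSpan Λ u := by
    refine ⟨n, hn0, ?_⟩
    have hsm : n • u = φ a₁ * ω + φ a₂ := by
      rw [Algebra.smul_def, hu, mul_div_cancel₀ _ hφn]
    rw [hsm]
    exact (s19_mem_span _).mpr ⟨a₁, a₂, rfl⟩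
  -- lattice parametrization
  set lam : {p : Polynomial Fq × Polynomial Fq // p ≠ 0} → L :=
    fun i => φ i.1.1 * ω + φ i.1.2 with hlam
  have hlam_norm : ∀ i, ‖lam i‖ = max (‖φ i.1.1‖ * ‖ω‖) ‖φ i.1.2‖ := fun i => lemA _ _
  have hlam_ne : ∀ i, lam i ≠ 0 := by
    intro i hi
    obtain ⟨h1, h2⟩ := hzero _ _ hi
    exact i.2 (Prod.ext h1 h2)
  have hlam_mem : ∀ i, lam i ∈ Λ := fun i => (s19_mem_span _).mpr ⟨_, _, rfl⟩
  have hlam1 : ∀ i, 1 ≤ ‖lam i‖ := by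
    intro i
    rw [hlam_norm i]
    by_cases hb : i.1.1 = 0
    · have hc : i.1.2 ≠ 0 := fun h => i.2 (Prod.ext hb h)
      calc (1:ℝ) ≤ ‖φ i.1.2‖ := by rw [hA _ hc]; exact one_le_pow₀ hq1.le
        _ ≤ _ := le_max_right _ _
    · have h1 : (1:ℝ) ≤ ‖φ i.1.1‖ := by rw [hA _ hb]; exact one_le_pow₀ hq1.le
      calc (1:ℝ) ≤ ‖φ i.1.1‖ * ‖ω‖ := by nlinarith
        _ ≤ _ := le_max_left _ _
  have hlam_pos : ∀ i, (0:ℝ) < ‖lam i‖ := fun i => lt_of_lt_of_le one_pos (hlam1 i)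
  have hbij : Function.Bijective
      (fun i : {p : Polynomial Fq × Polynomial Fq // p ≠ 0} =>
        (⟨lam i, hlam_mem i, hlam_ne i⟩ : {x : L // x ∈ Λ ∧ x ≠ 0})) := by
    constructor
    · intro i j hij
      have h0 : lam i = lam j := congrArg Subtype.val hij
      have hz : φ (i.1.1 - j.1.1) * ω + φ (i.1.2 - j.1.2) = 0 := by
        rw [map_sub, map_sub]
        simp only [hlam] at h0
        linear_combination h0
      obtain ⟨h1, h2⟩ := hzero _ _ hz
      exact Subtype.ext (Prod.ext (sub_eq_zero.mp h1) (sub_eq_zero.mp h2))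
    · rintro ⟨x, hx, hx0⟩
      obtain ⟨b, c, rfl⟩ := (s19_mem_span x).mp hx
      have hbc : ((b, c) : Polynomial Fq × Polynomial Fq) ≠ 0 := by
        intro h
        apply hx0
        have hb : b = 0 := congrArg Prod.fst h
        have hc : c = 0 := congrArg Prod.snd h
        rw [hb, hc]
        simp
      exact ⟨⟨(b,c), hbc⟩, rfl⟩
  have hexp : latExp Λ u = u * ∏' i, (1 - u / lam i) := by
    rw [latExp]
    congr 1
    exact (Equiv.tprod_eq (Equiv.ofBijective _ hbij)
      (fun l : {x : L // x ∈ Λ ∧ x ≠ 0} => (1 - u / (l : L)))).symm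
  set g : {p : Polynomial Fq × Polynomial Fq // p ≠ 0} → L := fun i => 1 - u / lam i with hg
  have hg_sub : ∀ i, ‖g i - 1‖ = ‖u‖ / ‖lam i‖ := by
    intro i
    have h1 : g i - 1 = -(u / lam i) := by simp only [hg]; ring
    rw [h1, norm_neg, norm_div]
  have hvanish : ∀ ε : ℝ, 0 < ε →
      {i : {p : Polynomial Fq × Polynomial Fq // p ≠ 0} | ε ≤ ‖g i - 1‖}.Finite := by
    intro ε hε
    obtain ⟨D', hD'⟩ := pow_unbounded_of_one_lt (‖u‖ / ε) hq1
    have hfin : (Subtype.val ⁻¹'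
        ((s19_degLT Fq D' ×ˢ s19_degLT Fq D' : Finset (Polynomial Fq × Polynomial Fq)) :
          Set (Polynomial Fq × Polynomial Fq))).Finite :=
      Set.Finite.preimage
        (f := (Subtype.val : {p : Polynomial Fq × Polynomial Fq // p ≠ 0} →
          Polynomial Fq × Polynomial Fq))
        (Subtype.val_injective.injOn) (Finset.finite_toSet _)
    refine hfin.subset ?_
    intro i hi
    simp only [Set.mem_setOf_eq] at hi
    rw [hg_sub i] at hi
    have hl0 := hlam_pos i
    rw [le_div_iff₀ hl0] at hi
    have hlam_lt : ‖lam i‖ < (q:ℝ)^D' := by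
      calc ‖lam i‖ ≤ ‖u‖ / ε := by rw [le_div_iff₀ hε]; linarith [mul_comm ε ‖lam i‖]
        _ < _ := hD'
    show i.1 ∈ ((s19_degLT Fq D' ×ˢ s19_degLT Fq D' : Finset (Polynomial Fq × Polynomial Fq)) :
      Set (Polynomial Fq × Polynomial Fq))
    rw [Finset.mem_coe, Finset.mem_product]
    constructor
    · rw [s19_mem_degLT]
      by_cases hb : i.1.1 = 0
      · rw [hb, Polynomial.degree_zero]
        exact WithBot.bot_lt_coe _
      · rw [Polynomial.degree_eq_natDegree hb]
        have hle : (q:ℝ) ^ i.1.1.natDegree ≤ ‖lam i‖ := by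
          rw [hlam_norm i]
          calc (q:ℝ)^i.1.1.natDegree = ‖φ i.1.1‖ := (hA _ hb).symm
            _ ≤ ‖φ i.1.1‖ * ‖ω‖ := le_mul_of_one_le_right (norm_nonneg _) hω1
            _ ≤ _ := le_max_left _ _
        have hlt := (pow_lt_pow_iff_right₀ hq1).mp (lt_of_le_of_lt hle hlam_lt)
        exact_mod_cast hlt
    · rw [s19_mem_degLT]
      by_cases hc : i.1.2 = 0
      · rw [hc, Polynomial.degree_zero]
        exact WithBot.bot_lt_coe _
      · rw [Polynomial.degree_eq_natDegree hc]
        have hle : (q:ℝ) ^ i.1.2.natDegree ≤ ‖lam i‖ := by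
          rw [hlam_norm i]
          calc (q:ℝ)^i.1.2.natDegree = ‖φ i.1.2‖ := (hA _ hc).symm
            _ ≤ _ := le_max_right _ _
        have hlt := (pow_lt_pow_iff_right₀ hq1).mp (lt_of_le_of_lt hle hlam_lt)
        exact_mod_cast hlt
  have hmul : Multipliable g := s19_multipliable hna g hvanish
  have hPnorm : ∏' i, ‖g i‖ = ‖∏' i, g i‖ :=
    (hmul.hasProd.map (s19_normHom L) continuous_norm).tprod_eq
  have hgnorm : ∀ i, ‖g i‖ = ‖lam i - u‖ / ‖lam i‖ := by
    intro i
    have h1 : g i = (lam i - u) / lam i := by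
      simp only [hg]
      rw [sub_div, div_self (hlam_ne i)]
    rw [h1, norm_div]
  have hlamu : ∀ i, lam i - u = (φ (i.1.1 * n - a₁) * ω + φ (i.1.2 * n - a₂)) / φ n := by
    intro i
    simp only [hlam, hu]
    rw [map_sub, map_sub, map_mul, map_mul]
    field_simp
    ring
  have hgnorm' : ∀ i, ‖g i‖ =
      max (‖φ (i.1.1 * n - a₁)‖ * ‖ω‖) ‖φ (i.1.2 * n - a₂)‖ / ((q:ℝ)^D * ‖lam i‖) := by
    intro i
    rw [hgnorm i, hlamu i, norm_div, lemA, hφnn, div_div]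
  have haux : ∀ (b a : Polynomial Fq), b ≠ 0 → a.degree < n.degree →
      (b * n - a ≠ 0 ∧ ‖φ (b * n - a)‖ = (q:ℝ)^(b.natDegree + D)) := by
    intro b a hb hadeg
    have hbn : b * n ≠ 0 := mul_ne_zero hb hn0
    have hd : a.degree < (b*n).degree := by
      refine lt_of_lt_of_le hadeg ?_
      rw [Polynomial.degree_mul]
      exact le_add_of_nonneg_left (Polynomial.zero_le_degree_iff.mpr hb)
    have hsub := Polynomial.degree_sub_eq_left_of_degree_lt hd
    have hne : b*n - a ≠ 0 := by
      intro h
      rw [h, Polynomial.degree_zero] at hsub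
      exact hbn (Polynomial.degree_eq_bot.mp hsub.symm)
    refine ⟨hne, ?_⟩
    rw [hA _ hne, Polynomial.natDegree_eq_of_degree_eq hsub,
      Polynomial.natDegree_mul hb hn0]
  have ha₂lt : ‖φ a₂‖ < (q:ℝ)^D := by
    by_cases h2 : a₂ = 0
    · rw [h2, map_zero, norm_zero]; positivity
    · rw [hA _ h2]; exact pow_lt_pow_right₀ hq1 (hdeg a₂ ha₂ h2)
  have claim1 : ∀ i, i.1.1 ≠ 0 → ‖g i‖ = 1 := by
    intro i hb
    obtain ⟨hne1, hval1⟩ := haux i.1.1 a₁ hb ha₁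
    suffices hnum2 : max (‖φ (i.1.1*n - a₁)‖ * ‖ω‖) ‖φ (i.1.2*n - a₂)‖
        = (q:ℝ)^D * ‖lam i‖ by
      rw [hgnorm' i, hnum2, div_self (ne_of_gt (mul_pos (pow_pos hq0 D) (hlam_pos i)))]
    rw [hval1, hlam_norm i, hA _ hb]
    by_cases hc : i.1.2 = 0
    · rw [hc, zero_mul, zero_sub, map_neg, norm_neg, map_zero, norm_zero]
      rw [max_eq_left (le_of_lt (by
        calc ‖φ a₂‖ < (q:ℝ)^D := ha₂lt
          _ ≤ (q:ℝ)^(i.1.1.natDegree + D) := pow_le_pow_right₀ hq1.le (by omega)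
          _ ≤ (q:ℝ)^(i.1.1.natDegree + D) * ‖ω‖ :=
              le_mul_of_one_le_right (by positivity) hω1))]
      rw [max_eq_left (by positivity), pow_add]
      ring
    · obtain ⟨hne2, hval2⟩ := haux i.1.2 a₂ hc ha₂
      rw [hval2, hA _ hc, pow_add, pow_add,
        mul_max_of_nonneg _ _ (pow_nonneg hq0.le D)]
      congr 1 <;> ring
  have claim2 : ∀ i, i.1.1 = 0 →
      ‖g i‖ = max (‖φ a₁‖ * ‖ω‖) ((q:ℝ)^(i.1.2.natDegree + D)) /
        ((q:ℝ)^D * (q:ℝ)^i.1.2.natDegree) := by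
    intro i hb
    have hc0 : i.1.2 ≠ 0 := fun h => i.2 (Prod.ext hb h)
    obtain ⟨hne2, hval2⟩ := haux i.1.2 a₂ hc0 ha₂
    rw [hgnorm' i, hlam_norm i, hb]
    rw [zero_mul, zero_sub, map_neg, norm_neg, map_zero, norm_zero, zero_mul]
    rw [hval2, hA _ hc0, max_eq_right (by positivity : (0:ℝ) ≤ (q:ℝ) ^ (i.1.2).natDegree)]
  have hbound_a₁k : ‖φ a₁‖ * ‖ω‖ ≤ (q:ℝ)^k := by
    by_cases h1 : a₁ = 0
    · rw [h1, map_zero, norm_zero, zero_mul]; positivity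
    · rw [hA _ h1, hωl, ← pow_add]
      apply pow_le_pow_right₀ hq1.le
      rw [hk, if_neg h1]
      omega
  -- WithBot computation
  have hwb : max (((ℓ : ℤ) : WithBot ℤ) + a₁.degree.map (fun k : ℕ => (k : ℤ)))
      (a₂.degree.map (fun k : ℕ => (k : ℤ))) = (((k:ℕ) : ℤ) : WithBot ℤ) := by
    by_cases h1 : a₁ = 0
    · have h2 : a₂ ≠ 0 := fun h2 => ha ⟨h1, h2⟩
      rw [h1, Polynomial.degree_zero, Polynomial.degree_eq_natDegree h2, hk, if_pos h1]
      rw [Nat.cast_withBot, WithBot.map_coe, WithBot.map_bot]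
      simp
    · rw [Polynomial.degree_eq_natDegree h1, hk, if_neg h1]
      by_cases h2 : a₂ = 0
      · rw [h2, Polynomial.degree_zero, Polynomial.natDegree_zero]
        rw [Nat.cast_withBot, WithBot.map_coe, WithBot.map_bot,
          max_eq_left (bot_le : (⊥ : WithBot ℤ) ≤ _)]
        norm_cast
        omega
      · rw [Polynomial.degree_eq_natDegree h2]
        rw [Nat.cast_withBot, Nat.cast_withBot, WithBot.map_coe, WithBot.map_coe]
        norm_cast

  suffices hS : latExp Λ u ≠ 0 ∧
      (0 ≤ logq q u → logq q (latExp Λ u) =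
        ((q:ℝ) / ((q:ℝ) - 1)) * ((q:ℝ) ^ (logq q u) - 1)) ∧
      (logq q u < 0 → logq q (latExp Λ u) = logq q u) by
    exact ⟨hpart1, hnotin, ⟨((k:ℕ):ℤ), hwb, by rw [hlogu]; push_cast; ring⟩,
      hS.1, hS.2.1, hS.2.2⟩
  by_cases hcase : k < D
  · have hall1 : ∀ i, ‖g i‖ = 1 := by
      intro i
      by_cases hb : i.1.1 = 0
      · rw [claim2 i hb,
          max_eq_right (le_trans hbound_a₁k (pow_le_pow_right₀ hq1.le (by omega))),
          pow_add, div_eq_one_iff_eq (ne_of_gt (by positivity))]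
        ring
      · exact claim1 i hb
    have hprod1 : ∏' i, ‖g i‖ = 1 := by
      rw [tprod_eq_prod (s := (∅ : Finset _)) (fun i _ => hall1 i)]
      simp
    have hnormP : ‖∏' i, g i‖ = 1 := by rw [← hPnorm, hprod1]
    have hlat : ‖latExp Λ u‖ = ‖u‖ := by rw [hexp, norm_mul, hnormP, mul_one]
    refine ⟨?_, ?_, ?_⟩
    · intro h0
      rw [h0, norm_zero] at hlat
      exact absurd hlat.symm (ne_of_gt hupos)
    · intro h0
      exfalso
      rw [hlogu] at h0
      have hkD : (k:ℝ) < (D:ℝ) := by exact_mod_cast hcase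
      linarith
    · intro _
      simp only [logq]
      rw [hlat]
  · push_neg at hcase
    have ha₁0 : a₁ ≠ 0 := by
      intro h1
      have h2 : a₂ ≠ 0 := fun h2 => ha ⟨h1, h2⟩
      have hkk : k = a₂.natDegree := by rw [hk, if_pos h1]
      have := hdeg a₂ ha₂ h2
      omega
    set M := k - D with hM
    have hMD : M + D = k := by omega
    have hkda : k = ℓ + a₁.natDegree := by
      by_cases h2 : a₂ = 0
      · rw [hk, if_neg ha₁0, h2, Polynomial.natDegree_zero]
        omega
      · have h3 := hdeg a₂ ha₂ h2
        have hc2 : D ≤ k := hcase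
        rw [hk, if_neg ha₁0] at hc2
        rw [hk, if_neg ha₁0]
        omega
    have ha₁ω : ‖φ a₁‖ * ‖ω‖ = (q:ℝ)^(M + D) := by
      rw [hA _ ha₁0, hωl, ← pow_add, hMD, hkda]
      congr 1
      omega
    set E : Finset {p : Polynomial Fq × Polynomial Fq // p ≠ 0} :=
      ((s19_degLT Fq M).erase 0).attach.image
        (fun (c : {x // x ∈ (s19_degLT Fq M).erase 0}) =>
          (⟨((0 : Polynomial Fq), c.1), fun h =>
          (Finset.mem_erase.mp c.2).1 (by simpa using congrArg Prod.snd h)⟩ :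
          {p : Polynomial Fq × Polynomial Fq // p ≠ 0})) with hE
    have houtside : ∀ i ∉ E, ‖g i‖ = 1 := by
      intro i hiE
      by_cases hb : i.1.1 = 0
      · have hc0 : i.1.2 ≠ 0 := fun h => i.2 (Prod.ext hb h)
        by_cases hdc : i.1.2.natDegree < M
        · exfalso
          apply hiE
          rw [hE, Finset.mem_image]
          have hcmem : i.1.2 ∈ (s19_degLT Fq M).erase 0 := by
            rw [Finset.mem_erase, s19_mem_degLT]
            exact ⟨hc0, by rw [Polynomial.degree_eq_natDegree hc0]; exact_mod_cast hdc⟩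
          exact ⟨⟨i.1.2, hcmem⟩, Finset.mem_attach _ _,
            Subtype.ext (Prod.ext hb.symm rfl)⟩
        · rw [claim2 i hb, ha₁ω,
            max_eq_right (pow_le_pow_right₀ hq1.le (by omega)),
            pow_add, div_eq_one_iff_eq (ne_of_gt (by positivity))]
          ring
      · exact claim1 i hb
    have hEval : ∀ (c : Polynomial Fq) (hc : c ∈ (s19_degLT Fq M).erase 0)
        (h : ((0 : Polynomial Fq), c) ≠ (0 : Polynomial Fq × Polynomial Fq)),
        ‖g ⟨(0, c), h⟩‖ = (q:ℝ)^(M - c.natDegree) := by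
      intro c hc h
      have hc0 : c ≠ 0 := (Finset.mem_erase.mp hc).1
      have hdc : c.natDegree < M := by
        have h2 := (Finset.mem_erase.mp hc).2
        rw [s19_mem_degLT, Polynomial.degree_eq_natDegree hc0] at h2
        exact_mod_cast h2
      rw [claim2 ⟨(0, c), h⟩ rfl]
      show max (‖φ a₁‖ * ‖ω‖) ((q:ℝ)^(c.natDegree + D)) /
          ((q:ℝ)^D * (q:ℝ)^c.natDegree) = _
      rw [ha₁ω, max_eq_left (pow_le_pow_right₀ hq1.le (by omega)),
        div_eq_iff (ne_of_gt (by positivity)), ← pow_add, ← pow_add]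
      congr 1
      omega
    have hprodE : ∏' i, ‖g i‖
        = (q:ℝ) ^ (∑ c ∈ (s19_degLT Fq M).erase 0, (M - c.natDegree)) := by
      rw [tprod_eq_prod (s := E) houtside, hE, Finset.prod_image (by
        intro x hx y hy hxy
        exact Subtype.ext
          (congrArg (fun i : {p : Polynomial Fq × Polynomial Fq // p ≠ 0} => i.1.2) hxy))]
      conv_rhs => rw [← Finset.prod_pow_eq_pow_sum,
        ← Finset.prod_attach ((s19_degLT Fq M).erase 0)
          (fun c => (q:ℝ)^(M - c.natDegree))]
      exact Finset.prod_congr rfl fun c _ => hEval c.1 c.2 _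
    have hnormPP : ‖∏' i, g i‖
        = (q:ℝ) ^ (∑ c ∈ (s19_degLT Fq M).erase 0, (M - c.natDegree)) := by
      rw [← hPnorm, hprodE]
    set T := ∑ c ∈ (s19_degLT Fq M).erase 0, (M - c.natDegree) with hT
    have hlat : ‖latExp Λ u‖ = (q:ℝ)^k / (q:ℝ)^D * (q:ℝ)^T := by
      rw [hexp, norm_mul, hknorm, hnormPP]
    have hlatlog : logq q (latExp Λ u) = (M:ℝ) + (T:ℝ) := by
      rw [logq, hlat, ← Real.rpow_natCast (q:ℝ) k, ← Real.rpow_natCast (q:ℝ) D,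
        ← Real.rpow_natCast (q:ℝ) T, ← Real.rpow_sub hq0, ← Real.rpow_add hq0,
        Real.logb_rpow hq0 hqne]
      have hkMD : (k:ℝ) = (M:ℝ) + (D:ℝ) := by exact_mod_cast hMD.symm
      rw [hkMD]
      ring
    have hTval : (T:ℝ) = ∑ j ∈ Finset.range M, ((q:ℝ)^(j+1) - 1) := by
      rw [hT, s19_sumT hq M, Nat.cast_sum]
      refine Finset.sum_congr rfl fun j _ => ?_
      rw [Nat.cast_sub (Nat.one_le_pow _ _ (by omega)), Nat.cast_pow, Nat.cast_one]
    refine ⟨?_, ?_, ?_⟩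
    · intro h0
      rw [h0, norm_zero] at hlat
      have hpos : (0:ℝ) < (q:ℝ)^k / (q:ℝ)^D * (q:ℝ)^T := by positivity
      linarith
    · intro _
      rw [hlatlog, hTval, s19_real_ident hq1 M, hlogu]
      have hMk : (k:ℝ) - (D:ℝ) = ((M:ℕ):ℝ) := by
        have hkMD : (k:ℝ) = (M:ℝ) + (D:ℝ) := by exact_mod_cast hMD.symm
        linarith
      rw [hMk, Real.rpow_natCast]
    · intro h0
      exfalso
      rw [hlogu] at h0
      have hDk : (D:ℝ) ≤ (k:ℝ) := by exact_mod_cast hcase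
      linarith
end
end
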